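/- arXiv:2308.05922 — 11 statements merged into one kernel-verified Lean document; each statement's English description precedes it below -/
import Mathlib

section
/- Assume K ⊆ V is a nonempty cone, J ⊆ co K is a convex cone with co(K ∩ J) = J, and COP(K ∩ J) is feasible with finite optimal value, i.e., −∞ < ζ_p(K ∩ J) < +∞. Then −∞ < ζ_p(J) < +∞ if and only if −∞ < ζ_p(K ∩ J) = ζ_p(J) < +∞ (i.e., the relaxed problem COP(J) has a finite value exactly when its value coincides with that of COP(K ∩ J)). -/
open RealInnerProductSpace

variable {V : Type*} [NormedAddCommGroup V] [InnerProductSpace ℝ V]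

/-- A (not necessarily convex or closed) cone: closed under nonnegative scaling. -/
def IsCone (C : Set V) : Prop := ∀ X ∈ C, ∀ l : ℝ, 0 ≤ l → l • X ∈ C

/-- The optimal value `ζ_p(C) = inf {⟨Q, X⟩ : X ∈ C, ⟨H, X⟩ = 1}` in `[-∞, +∞]`;
it equals `+∞` when the feasible set is empty. -/
noncomputable def zetaP (Q H : V) (C : Set V) : EReal :=
  sInf ((fun X => ((⟪Q, X⟫ : ℝ) : EReal)) '' {X | X ∈ C ∧ ⟪H, X⟫ = 1})

/-- Theorem 1.1: under Conditions (A) and (B), `-∞ < ζ_p(J) < ∞` iff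
`-∞ < ζ_p(K ∩ J) = ζ_p(J) < ∞`. -/
theorem stmt_0 [FiniteDimensional ℝ V] (Q H : V) (hH : H ≠ 0) (K J : Set V)
    (hKne : K.Nonempty) (hKcone : IsCone K)
    (hJconv : Convex ℝ J) (hJcone : IsCone J) (hJsub : J ⊆ convexHull ℝ K)
    (hB : convexHull ℝ (K ∩ J) = J)
    (hfeasA : ⊥ < zetaP Q H (K ∩ J)) (hfinA : zetaP Q H (K ∩ J) < ⊤) :
    (⊥ < zetaP Q H J ∧ zetaP Q H J < ⊤) ↔
      (⊥ < zetaP Q H (K ∩ J) ∧ zetaP Q H (K ∩ J) = zetaP Q H J ∧ zetaP Q H J < ⊤) := by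
  classical
  -- a feasible point of K ∩ J exists
  have hAne : ∃ X, X ∈ K ∩ J ∧ ⟪H, X⟫ = 1 := by
    by_contra h
    push_neg at h
    have hemp : {X | X ∈ K ∩ J ∧ ⟪H, X⟫ = 1} = ∅ := by
      ext X
      simp only [Set.mem_setOf_eq, Set.mem_empty_iff_false, iff_false, not_and]
      exact h X
    rw [zetaP, hemp, Set.image_empty, sInf_empty] at hfinA
    exact lt_irrefl _ hfinA
  have hle : zetaP Q H J ≤ zetaP Q H (K ∩ J) := by
    apply sInf_le_sInf
    apply Set.image_mono
    intro X hX
    exact ⟨hX.1.2, hX.2⟩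
  have hJtop : zetaP Q H J < ⊤ := lt_of_le_of_lt hle hfinA
  have hmain : ⊥ < zetaP Q H J → zetaP Q H (K ∩ J) ≤ zetaP Q H J := by
    intro hbot
    obtain ⟨X₀, hX₀, _⟩ := hAne
    have hJ0 : (0 : V) ∈ J := by
      have := hJcone X₀ hX₀.2 0 le_rfl
      simpa using this
    have hJadd : ∀ x y : V, x ∈ J → y ∈ J → x + y ∈ J := by
      intro x y hx hy
      have hmem : (2⁻¹ : ℝ) • x + (2⁻¹ : ℝ) • y ∈ J :=
        hJconv hx hy (by norm_num) (by norm_num) (by norm_num)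
      have := hJcone _ hmem 2 (by norm_num)
      simpa [smul_add, smul_smul] using this
    set ζ : ℝ := (zetaP Q H (K ∩ J)).toReal with hζdef
    have hζeq : zetaP Q H (K ∩ J) = (ζ : EReal) := (EReal.coe_toReal hfinA.ne hfeasA.ne').symm
    have hfeasval : ∀ y : V, y ∈ K ∩ J → ⟪H, y⟫ = 1 → ζ ≤ ⟪Q, y⟫ := by
      intro y hy hHy
      have h1 : zetaP Q H (K ∩ J) ≤ ((⟪Q, y⟫ : ℝ) : EReal) :=
        sInf_le ⟨y, ⟨hy, hHy⟩, rfl⟩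
      rw [hζeq] at h1
      exact_mod_cast h1
    rw [hζeq]
    apply le_sInf
    rintro e ⟨X, ⟨hXJ, hHX⟩, rfl⟩
    rw [EReal.coe_le_coe_iff]
    have hXrep : X ∈ convexHull ℝ (K ∩ J) := by rw [hB]; exact hXJ
    rw [convexHull_eq] at hXrep
    obtain ⟨ι, t, w, z, hw0, hw1, hz, hXeq⟩ := hXrep
    rw [Finset.centerMass_eq_of_sum_1 _ _ hw1] at hXeq
    set P : Finset ι := t.filter (fun i => 0 < ⟪H, z i⟫) with hP
    set u : V := ∑ i ∈ P, w i • z i with hu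
    set s : ℝ := ⟪H, u⟫ with hs
    have hrest : X - u = ∑ i ∈ t.filter (fun i => ¬ 0 < ⟪H, z i⟫), w i • z i := by
      have hsplit := Finset.sum_filter_add_sum_filter_not t (fun i => 0 < ⟪H, z i⟫)
        (fun i => w i • z i)
      rw [← hXeq, ← hsplit, ← hu]
      abel
    have hHrest : ⟪H, X - u⟫ ≤ 0 := by
      rw [hrest, inner_sum]
      apply Finset.sum_nonpos
      intro i hi
      rw [Finset.mem_filter] at hi
      rw [real_inner_smul_right]
      exact mul_nonpos_of_nonneg_of_nonpos (hw0 i hi.1) (le_of_not_gt hi.2)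
    have hs1 : 1 ≤ s := by
      have h1 : ⟪H, X - u⟫ = 1 - s := by
        rw [inner_sub_right, hHX]
      linarith [hHrest, h1.symm.le, h1.le]
    have hs0 : 0 < s := lt_of_lt_of_le one_pos hs1
    have hQu : s * ζ ≤ ⟪Q, u⟫ := by
      have hQu' : ⟪Q, u⟫ = ∑ i ∈ P, w i * ⟪Q, z i⟫ := by
        rw [hu, inner_sum]
        exact Finset.sum_congr rfl fun i _ => real_inner_smul_right _ _ _
      have hHu : s = ∑ i ∈ P, w i * ⟪H, z i⟫ := by
        rw [hs, hu, inner_sum]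
        exact Finset.sum_congr rfl fun i _ => real_inner_smul_right _ _ _
      rw [hQu', hHu, Finset.sum_mul]
      apply Finset.sum_le_sum
      intro i hi
      rw [hP, Finset.mem_filter] at hi
      have hzi : 0 < ⟪H, z i⟫ := hi.2
      have hyi : (⟪H, z i⟫)⁻¹ • z i ∈ K ∩ J :=
        ⟨hKcone _ (hz i hi.1).1 _ (inv_nonneg.mpr hzi.le),
         hJcone _ (hz i hi.1).2 _ (inv_nonneg.mpr hzi.le)⟩
      have hHyi : ⟪H, (⟪H, z i⟫)⁻¹ • z i⟫ = 1 := by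
        rw [real_inner_smul_right]
        field_simp
      have hv := hfeasval _ hyi hHyi
      rw [real_inner_smul_right] at hv
      have h2 : ⟪H, z i⟫ * ζ ≤ ⟪Q, z i⟫ := by
        have h4 := mul_le_mul_of_nonneg_left hv hzi.le
        rwa [mul_inv_cancel_left₀ hzi.ne'] at h4
      nlinarith [hw0 i hi.1, h2]
    have huJ : u ∈ J := by
      rw [hu]
      refine Finset.sum_induction _ (· ∈ J) hJadd hJ0 ?_
      intro i hi
      rw [hP, Finset.mem_filter] at hi
      exact hJcone _ (hz i hi.1).2 _ (hw0 i hi.1)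
    have hXuJ : X - u ∈ J := by
      rw [hrest]
      refine Finset.sum_induction _ (· ∈ J) hJadd hJ0 ?_
      intro i hi
      rw [Finset.mem_filter] at hi
      exact hJcone _ (hz i hi.1).2 _ (hw0 i hi.1)
    set v : V := X - s⁻¹ • u with hvdef
    have hvJ : v ∈ J := by
      have heq : v = (1 - s⁻¹) • u + (X - u) := by
        rw [hvdef, sub_smul, one_smul]
        abel
      rw [heq]
      refine hJadd _ _ (hJcone _ huJ _ ?_) hXuJ
      have : s⁻¹ ≤ 1 := by
        rw [inv_le_one_iff₀]
        right; exact hs1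
      linarith
    have hHv : ⟪H, v⟫ = 0 := by
      rw [hvdef, inner_sub_right, real_inner_smul_right, hHX, ← hs]
      field_simp
      ring
    have hQv : 0 ≤ ⟪Q, v⟫ := by
      by_contra hneg
      push_neg at hneg
      have hall : ∀ r : ℝ, zetaP Q H J ≤ (r : EReal) := by
        intro r
        set τ : ℝ := max 0 ((⟪Q, X⟫ - r) / (-⟪Q, v⟫)) with hτ
        have hτ0 : 0 ≤ τ := le_max_left _ _
        have hXt : X + τ • v ∈ J := hJadd _ _ hXJ (hJcone _ hvJ _ hτ0)
        have hHXt : ⟪H, X + τ • v⟫ = 1 := by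
          rw [inner_add_right, real_inner_smul_right, hHv, hHX]
          ring
        have hval : ⟪Q, X + τ • v⟫ ≤ r := by
          rw [inner_add_right, real_inner_smul_right]
          have hτ2 : (⟪Q, X⟫ - r) / (-⟪Q, v⟫) ≤ τ := le_max_right _ _
          have hvpos : 0 < -⟪Q, v⟫ := by linarith
          rw [div_le_iff₀ hvpos] at hτ2
          nlinarith
        calc zetaP Q H J ≤ ((⟪Q, X + τ • v⟫ : ℝ) : EReal) := sInf_le ⟨_, ⟨hXt, hHXt⟩, rfl⟩
          _ ≤ (r : EReal) := by exact_mod_cast hval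
      have hreal : zetaP Q H J = (((zetaP Q H J).toReal : ℝ) : EReal) :=
        (EReal.coe_toReal hJtop.ne hbot.ne').symm
      have hzJ := hall ((zetaP Q H J).toReal - 1)
      rw [hreal] at hzJ
      have : (zetaP Q H J).toReal ≤ (zetaP Q H J).toReal - 1 := by exact_mod_cast hzJ
      linarith
    have hQX : ⟪Q, X⟫ = s⁻¹ * ⟪Q, u⟫ + ⟪Q, v⟫ := by
      rw [hvdef, inner_sub_right, real_inner_smul_right]
      ring
    have hfin : ζ ≤ s⁻¹ * ⟪Q, u⟫ := by
      have h3 := mul_le_mul_of_nonneg_left hQu (inv_nonneg.mpr hs0.le)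
      calc ζ = s⁻¹ * (s * ζ) := by field_simp
        _ ≤ s⁻¹ * ⟪Q, u⟫ := h3
    linarith
  constructor
  · rintro ⟨h1, h2⟩
    exact ⟨hfeasA, le_antisymm (hmain h1) hle, h2⟩
  · rintro ⟨_, heq, h2⟩
    exact ⟨heq ▸ hfeasA, h2⟩
end

section
/- Let K ⊆ V be a nonempty closed cone, let J ⊆ co K be a closed convex cone, and assume H ∈ int(K*), the interior of the dual cone of K. Then co(K ∩ J) = J if and only if for every Q ∈ V one has ζ_p(K ∩ J; Q) = ζ_p(J; Q), where for a cone C, ζ_p(C; Q) = inf{⟨Q,X⟩ : X ∈ C, ⟨H,X⟩ = 1} ∈ [−∞,+∞] with value +∞ when the feasible set is empty. -/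
open RealInnerProductSpace

variable {V : Type*} [NormedAddCommGroup V] [InnerProductSpace ℝ V]

/-- The dual cone `C* = {Y : ⟨X, Y⟩ ≥ 0 for all X ∈ C}`. -/
def dualCone (C : Set V) : Set V := {Y | ∀ X ∈ C, 0 ≤ ⟪X, Y⟫}

theorem zetaP_le {Q H : V} {C : Set V} {X : V} (hX : X ∈ C) (h1 : ⟪H, X⟫ = 1) :
    zetaP Q H C ≤ ((⟪Q, X⟫ : ℝ) : EReal) :=
  sInf_le ⟨X, ⟨hX, h1⟩, rfl⟩

theorem le_zetaP {Q H : V} {C : Set V} {r : EReal}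
    (h : ∀ X ∈ C, ⟪H, X⟫ = 1 → r ≤ ((⟪Q, X⟫ : ℝ) : EReal)) : r ≤ zetaP Q H C :=
  le_sInf (by rintro _ ⟨X, ⟨hX, h1⟩, rfl⟩; exact h X hX h1)

/-- Summing a `Fin c`-indexed family after extending it by zeros to `Fin n`. -/
theorem sum_extend_zero {M : Type*} [AddCommMonoid M] {c n : ℕ} (hcn : c ≤ n) (G : Fin c → M) :
    (∑ j : Fin n, if h : (j : ℕ) < c then G ⟨j, h⟩ else 0) = ∑ i : Fin c, G i := by
  classical
  set F : ℕ → M := fun j => if h : j < c then G ⟨j, h⟩ else 0 with hF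
  have h1 : (∑ j : Fin n, if h : (j : ℕ) < c then G ⟨j, h⟩ else 0) = ∑ j ∈ Finset.range n, F j :=
    Fin.sum_univ_eq_sum_range F n
  have h2 : (∑ i : Fin c, G i) = ∑ j ∈ Finset.range c, F j := by
    rw [← Fin.sum_univ_eq_sum_range F c]
    apply Finset.sum_congr rfl
    intro i _
    simp [hF, i.isLt]
  rw [h1, h2]
  symm
  apply Finset.sum_subset (Finset.range_subset_range.mpr hcn)
  intro x _ hx
  rw [Finset.mem_range] at hx
  simp [hF, hx]

/-- The convex hull of a compact set in a finite-dimensional real normed space is compact. -/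
theorem isCompact_convexHull_of_isCompact [FiniteDimensional ℝ V] {S : Set V}
    (hS : IsCompact S) : IsCompact (convexHull ℝ S) := by
  classical
  set n := Module.finrank ℝ V + 1 with hn
  set f : (Fin n → ℝ) × (Fin n → V) → V := fun p => ∑ i, p.1 i • p.2 i with hf
  have hcont : Continuous f := by
    apply continuous_finset_sum
    intro i _
    exact ((continuous_apply i).comp continuous_fst).smul
      ((continuous_apply i).comp continuous_snd)
  have hdom : IsCompact (stdSimplex ℝ (Fin n) ×ˢ Set.univ.pi fun _ : Fin n => S) :=
    IsCompact.prod (isCompact_stdSimplex (𝕜 := ℝ) (ι := Fin n)) (isCompact_univ_pi fun _ => hS)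
  have himg : convexHull ℝ S = f '' (stdSimplex ℝ (Fin n) ×ˢ Set.univ.pi fun _ : Fin n => S) := by
    apply Set.Subset.antisymm
    · intro x hx
      obtain ⟨ι, hfin, z, w, hrange, haff, hwpos, hwsum, hxeq⟩ :=
        eq_pos_convex_span_of_mem_convexHull hx
      letI := hfin
      have hcard : Fintype.card ι ≤ n := by
        have h1 := haff.card_le_finrank_succ
        have h2 := Submodule.finrank_le (vectorSpan ℝ (Set.range z))
        omega
      obtain ⟨i0⟩ : Nonempty ι := by
        by_contra h
        rw [not_nonempty_iff] at h
        rw [Finset.univ_eq_empty, Finset.sum_empty] at hwsum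
        norm_num at hwsum
      set c := Fintype.card ι with hcdef
      set e := Fintype.equivFin ι with he
      set w' : Fin n → ℝ := fun j => if h : (j : ℕ) < c then w (e.symm ⟨j, h⟩) else 0 with hw'
      set z' : Fin n → V := fun j => if h : (j : ℕ) < c then z (e.symm ⟨j, h⟩) else z i0 with hz'
      have hsum1 : ∑ j : Fin n, w' j = 1 := by
        have := sum_extend_zero hcard (fun i : Fin c => w (e.symm i))
        rw [hw']
        rw [this, Equiv.sum_comp e.symm w]
        exact hwsum
      have hsum2 : ∑ j : Fin n, w' j • z' j = x := by
        have hpt : ∀ j : Fin n, w' j • z' j =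
            if h : (j : ℕ) < c then (fun i => w i • z i) (e.symm ⟨j, h⟩) else 0 := by
          intro j
          by_cases h : (j : ℕ) < c <;> simp [hw', hz', h]
        rw [Finset.sum_congr rfl fun j _ => hpt j,
          sum_extend_zero hcard (fun i : Fin c => (fun i => w i • z i) (e.symm i)),
          Equiv.sum_comp e.symm (fun i => w i • z i)]
        exact hxeq
      refine ⟨(w', z'), ⟨?_, ?_⟩, hsum2⟩
      · refine ⟨fun j => ?_, hsum1⟩
        rw [hw']
        by_cases h : (j : ℕ) < c
        · simp only [h, dif_pos]
          exact (hwpos _).le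
        · simp [h]
      · rw [Set.mem_univ_pi]
        intro j
        rw [hz']
        by_cases h : (j : ℕ) < c
        · simp only [h, dif_pos]
          exact hrange ⟨_, rfl⟩
        · simp only [h, dif_neg, not_false_iff]
          exact hrange ⟨i0, rfl⟩
    · rintro _ ⟨⟨w, z⟩, ⟨hw, hz⟩, rfl⟩
      exact (convex_convexHull ℝ S).sum_mem (fun i _ => hw.1 i) hw.2
        (fun i _ => subset_convexHull ℝ S (Set.mem_univ_pi.mp hz i))
  rw [himg]
  exact hdom.image hcont

/-- Theorem 1.2 (iii): for closed `K`, closed convex `J ⊆ co K` and `H ∈ int K*`,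
`co (K ∩ J) = J` iff `ζ_p(K ∩ J; Q) = ζ_p(J; Q)` for every `Q`. -/
theorem stmt_3 [FiniteDimensional ℝ V] (H : V) (hH : H ≠ 0) (K J : Set V)
    (hKne : K.Nonempty) (hKcone : IsCone K) (hKclosed : IsClosed K)
    (hJconv : Convex ℝ J) (hJcone : IsCone J) (hJclosed : IsClosed J)
    (hJsub : J ⊆ convexHull ℝ K)
    (hHint : H ∈ interior (dualCone K)) :
    convexHull ℝ (K ∩ J) = J ↔ ∀ Q : V, zetaP Q H (K ∩ J) = zetaP Q H J := by
  classical
  haveI : CompleteSpace V := FiniteDimensional.complete ℝ V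
  obtain ⟨ε, hε, hball⟩ := Metric.mem_nhds_iff.mp (mem_interior_iff_mem_nhds.mp hHint)
  set c : ℝ := ε / 2 with hc
  have hcpos : 0 < c := by positivity
  -- positivity of ⟪H, ·⟫ on K
  have hposK : ∀ X ∈ K, c * ‖X‖ ≤ ⟪H, X⟫ := by
    intro X hX
    rcases eq_or_ne X 0 with rfl | hX0
    · simp
    · have hXn : (0 : ℝ) < ‖X‖ := norm_pos_iff.mpr hX0
      have hY : H - (c * ‖X‖⁻¹) • X ∈ dualCone K := by
        apply hball
        rw [Metric.mem_ball, dist_eq_norm, sub_sub_cancel_left, norm_neg, norm_smul]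
        rw [Real.norm_eq_abs, abs_of_nonneg (by positivity)]
        rw [mul_assoc, inv_mul_cancel₀ hXn.ne']
        rw [mul_one, hc]
        linarith
      have h0 := hY X hX
      rw [inner_sub_right, real_inner_smul_right, real_inner_self_eq_norm_sq] at h0
      have hcomm := real_inner_comm X H
      have h2 : c * ‖X‖⁻¹ * ‖X‖ ^ 2 = c * ‖X‖ := by
        field_simp
      nlinarith [h0, hcomm]
  have hposCo : ∀ X ∈ convexHull ℝ K, c * ‖X‖ ≤ ⟪H, X⟫ := by
    have hconvset : Convex ℝ {X : V | c * ‖X‖ ≤ ⟪H, X⟫} := by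
      intro x hx y hy a b ha hb hab
      simp only [Set.mem_setOf_eq] at hx hy ⊢
      have hnorm : ‖a • x + b • y‖ ≤ a * ‖x‖ + b * ‖y‖ := by
        calc ‖a • x + b • y‖ ≤ ‖a • x‖ + ‖b • y‖ := norm_add_le _ _
          _ = a * ‖x‖ + b * ‖y‖ := by
              rw [norm_smul, norm_smul, Real.norm_eq_abs, Real.norm_eq_abs,
                abs_of_nonneg ha, abs_of_nonneg hb]
      rw [inner_add_right, real_inner_smul_right, real_inner_smul_right]
      nlinarith
    exact fun X hX => convexHull_min hposK hconvset hX
  have hKpos : ∀ X ∈ K, X ≠ 0 → 0 < ⟪H, X⟫ := fun X hX h0 =>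
    lt_of_lt_of_le (mul_pos hcpos (norm_pos_iff.mpr h0)) (hposK X hX)
  have hJpos : ∀ X ∈ J, X ≠ 0 → 0 < ⟪H, X⟫ := fun X hX h0 =>
    lt_of_lt_of_le (mul_pos hcpos (norm_pos_iff.mpr h0)) (hposCo X (hJsub hX))
  obtain ⟨k, hk⟩ := hKne
  have h0K : (0 : V) ∈ K := by simpa using hKcone k hk 0 le_rfl
  constructor
  · -- forward direction
    intro hco Q
    refine le_antisymm ?_ ?_
    · by_cases hS : ∃ Y, Y ∈ K ∩ J ∧ ⟪H, Y⟫ = 1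
      · obtain ⟨Y0, hY0, hY01⟩ := hS
        have hmt : zetaP Q H (K ∩ J) ≠ ⊤ :=
          (lt_of_le_of_lt (zetaP_le hY0 hY01) (EReal.coe_lt_top _)).ne
        rcases eq_or_ne (zetaP Q H (K ∩ J)) ⊥ with hmb | hmb
        · rw [hmb]; exact bot_le
        · set r := (zetaP Q H (K ∩ J)).toReal with hrdef
          have hr : (r : EReal) = zetaP Q H (K ∩ J) := EReal.coe_toReal hmt hmb
          rw [← hr]
          apply le_zetaP
          intro X hXJ hX1
          rw [EReal.coe_le_coe_iff]
          have hconv2 : Convex ℝ {x : V | r * ⟪H, x⟫ ≤ ⟪Q, x⟫} := by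
            intro x hx y hy a b ha hb hab
            simp only [Set.mem_setOf_eq] at hx hy ⊢
            rw [inner_add_right, inner_add_right, real_inner_smul_right,
              real_inner_smul_right, real_inner_smul_right, real_inner_smul_right]
            nlinarith
          have hhalf : K ∩ J ⊆ {x : V | r * ⟪H, x⟫ ≤ ⟪Q, x⟫} := by
            intro Y hY
            rcases eq_or_ne Y 0 with rfl | hY0'
            · simp
            · have ht : 0 < ⟪H, Y⟫ := hKpos Y hY.1 hY0'
              have hYm : (⟪H, Y⟫)⁻¹ • Y ∈ K ∩ J :=
                ⟨hKcone Y hY.1 _ (by positivity), hJcone Y hY.2 _ (by positivity)⟩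
              have h1 : ⟪H, (⟪H, Y⟫)⁻¹ • Y⟫ = 1 := by
                rw [real_inner_smul_right, inv_mul_cancel₀ ht.ne']
              have hle := zetaP_le (Q := Q) hYm h1
              rw [← hr, EReal.coe_le_coe_iff, real_inner_smul_right] at hle
              simp only [Set.mem_setOf_eq]
              rw [← sub_nonneg]
              have hle' : 0 ≤ (⟪H, Y⟫)⁻¹ * ⟪Q, Y⟫ - r := by linarith
              have hfs : ⟪Q, Y⟫ - r * ⟪H, Y⟫ = ⟪H, Y⟫ * ((⟪H, Y⟫)⁻¹ * ⟪Q, Y⟫ - r) := by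
                field_simp
              rw [hfs]
              exact mul_nonneg ht.le hle'
          have hmem : X ∈ convexHull ℝ (K ∩ J) := by rw [hco]; exact hXJ
          have := convexHull_min hhalf hconv2 hmem
          simpa [hX1] using this
      · -- feasible set of K ∩ J empty forces J ⊆ {0}
        push_neg at hS
        have hJ0 : J ⊆ {(0 : V)} := by
          rw [← hco]
          apply convexHull_min ?_ (convex_singleton 0)
          intro Y hY
          rcases eq_or_ne Y 0 with rfl | hY0'
          · exact Set.mem_singleton 0
          · exfalso
            have ht : 0 < ⟪H, Y⟫ := hKpos Y hY.1 hY0'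
            have hYm : (⟪H, Y⟫)⁻¹ • Y ∈ K ∩ J :=
              ⟨hKcone Y hY.1 _ (by positivity), hJcone Y hY.2 _ (by positivity)⟩
            have h1 : ⟪H, (⟪H, Y⟫)⁻¹ • Y⟫ = 1 := by
              rw [real_inner_smul_right, inv_mul_cancel₀ ht.ne']
            exact absurd h1 (hS _ hYm)
        have hJtop : zetaP Q H J = ⊤ := by
          unfold zetaP
          rw [show ((fun X => ((⟪Q, X⟫ : ℝ) : EReal)) '' {X | X ∈ J ∧ ⟪H, X⟫ = 1}) = ∅ from ?_]
          · exact sInf_empty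
          rw [Set.image_eq_empty]
          ext X
          simp only [Set.mem_setOf_eq, Set.mem_empty_iff_false, iff_false, not_and]
          intro hXJ
          have : X = 0 := hJ0 hXJ
          rw [this]
          simp
        rw [hJtop]
        exact le_top
    · apply sInf_le_sInf
      apply Set.image_mono
      intro X hX
      exact ⟨hX.1.2, hX.2⟩
  · -- backward direction
    intro hz
    apply Set.Subset.antisymm (convexHull_min Set.inter_subset_right hJconv)
    intro X hXJ
    rcases eq_or_ne X 0 with rfl | hX0
    · exact subset_convexHull ℝ _ ⟨h0K, hXJ⟩
    have ht : 0 < ⟪H, X⟫ := hJpos X hXJ hX0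
    set X' := (⟪H, X⟫)⁻¹ • X with hX'def
    have hX'J : X' ∈ J := hJcone X hXJ _ (by positivity)
    have hX'1 : ⟪H, X'⟫ = 1 := by
      rw [hX'def, real_inner_smul_right, inv_mul_cancel₀ ht.ne']
    set S := {Y : V | Y ∈ K ∩ J ∧ ⟪H, Y⟫ = 1} with hSdef
    have hSsub : S ⊆ K ∩ J := fun Y hY => hY.1
    have hScl : IsClosed S := by
      have hrw : S = (K ∩ J) ∩ {Y : V | ⟪H, Y⟫ = 1} := rfl
      rw [hrw]
      exact (hKclosed.inter hJclosed).inter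
        (isClosed_eq (continuous_const.inner continuous_id) continuous_const)
    have hSbd : S ⊆ Metric.closedBall 0 c⁻¹ := by
      intro Y hY
      rw [Metric.mem_closedBall, dist_zero_right]
      have h1 := hposK Y hY.1.1
      rw [hY.2] at h1
      rw [← one_div, le_div_iff₀ hcpos]
      linarith
    have hScomp : IsCompact S := (isCompact_closedBall (0 : V) c⁻¹).of_isClosed_subset hScl hSbd
    have hcoS : IsCompact (convexHull ℝ S) := isCompact_convexHull_of_isCompact hScomp
    by_cases hmem : X' ∈ convexHull ℝ S
    · have hX'in : X' ∈ convexHull ℝ (K ∩ J) := convexHull_mono hSsub hmem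
      have hXeq : ⟪H, X⟫ • X' = X := smul_inv_smul₀ ht.ne' X
      rw [← hXeq]
      -- convexHull of a cone is a cone
      have hsub2 : K ∩ J ⊆ {y : V | ⟪H, X⟫ • y ∈ convexHull ℝ (K ∩ J)} := fun y hy =>
        subset_convexHull ℝ _ ⟨hKcone y hy.1 _ ht.le, hJcone y hy.2 _ ht.le⟩
      have hcv : Convex ℝ {y : V | ⟪H, X⟫ • y ∈ convexHull ℝ (K ∩ J)} := by
        intro a ha b hb p q hp hq hpq
        simp only [Set.mem_setOf_eq] at ha hb ⊢
        have hrw : ⟪H, X⟫ • (p • a + q • b) = p • (⟪H, X⟫ • a) + q • (⟪H, X⟫ • b) := by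
          rw [smul_add, smul_comm (⟪H, X⟫) p, smul_comm (⟪H, X⟫) q]
        rw [hrw]
        exact (convex_convexHull ℝ _) ha hb hp hq hpq
      exact convexHull_min hsub2 hcv hX'in
    · exfalso
      obtain ⟨f, u, hfx, hfb⟩ :=
        geometric_hahn_banach_point_closed (convex_convexHull ℝ S) hcoS.isClosed hmem
      set Q' := (InnerProductSpace.toDual ℝ V).symm f - u • H with hQ'def
      have hQ'x : ∀ x : V, ⟪Q', x⟫ = f x - u * ⟪H, x⟫ := by
        intro x
        rw [hQ'def, inner_sub_left, real_inner_smul_left,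
          InnerProductSpace.toDual_symm_apply]
      have h1 : (0 : EReal) ≤ zetaP Q' H (K ∩ J) := by
        apply le_zetaP
        intro Y hY hY1
        have hYS : Y ∈ S := ⟨hY, hY1⟩
        have hfY := hfb Y (subset_convexHull ℝ S hYS)
        have : (0 : ℝ) ≤ ⟪Q', Y⟫ := by
          rw [hQ'x, hY1]
          linarith
        exact_mod_cast this
      have h2 : zetaP Q' H J ≤ ((⟪Q', X'⟫ : ℝ) : EReal) := zetaP_le hX'J hX'1
      have h3 : ⟪Q', X'⟫ < (0 : ℝ) := by
        rw [hQ'x, hX'1]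
        linarith
      have h4 : (0 : EReal) ≤ ((⟪Q', X'⟫ : ℝ) : EReal) :=
        le_trans h1 (le_trans (le_of_eq (hz Q')) h2)
      have h5 : (0 : ℝ) ≤ ⟪Q', X'⟫ := by exact_mod_cast h4
      linarith
end

section
/- Assume only that K ⊆ V is a nonempty cone and that J ⊆ co K is a convex cone with co(K ∩ J) = J (no feasibility of COP(K ∩ J) is assumed). Then −∞ < ζ_p(J) < +∞ if and only if −∞ < ζ_p(K ∩ J) = ζ_p(J) < +∞. -/
open RealInnerProductSpace

variable {V : Type*} [NormedAddCommGroup V] [InnerProductSpace ℝ V]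

lemma convexCone_add_mem {J : Set V} (hJconv : Convex ℝ J) (hJcone : IsCone J)
    {a b : V} (ha : a ∈ J) (hb : b ∈ J) : a + b ∈ J := by
  have h := hJconv ha hb (by norm_num : (0:ℝ) ≤ 1/2) (by norm_num : (0:ℝ) ≤ 1/2) (by norm_num)
  have h2 := hJcone _ h 2 (by norm_num)
  have : (2:ℝ) • ((1/2:ℝ) • a + (1/2:ℝ) • b) = a + b := by
    rw [smul_add, smul_smul, smul_smul]; norm_num
  rwa [this] at h2

lemma convexCone_smul_add_mem {J : Set V} (hJconv : Convex ℝ J) (hJcone : IsCone J)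
    {a b : V} (ha : a ∈ J) (hb : b ∈ J) {s t : ℝ} (hs : 0 ≤ s) (ht : 0 ≤ t) :
    s • a + t • b ∈ J :=
  convexCone_add_mem hJconv hJcone (hJcone _ ha _ hs) (hJcone _ hb _ ht)

/-- Key lemma: if X is feasible for J and ζ_p(J) > -∞, there is a feasible point of K ∩ J
with no larger objective value. -/
lemma key_lemma (Q H : V) {K J : Set V} (hKcone : IsCone K)
    (hJconv : Convex ℝ J) (hJcone : IsCone J)
    (hB : convexHull ℝ (K ∩ J) = J) {X : V} (hX : X ∈ J) (hHX : ⟪H, X⟫ = 1)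
    (hlb : ⊥ < zetaP Q H J) :
    ∃ y ∈ K ∩ J, ⟪H, y⟫ = 1 ∧ ⟪Q, y⟫ ≤ ⟪Q, X⟫ := by
  set v : ℝ := ⟪Q, X⟫ with hv
  -- representation of X as a convex combination of points of K ∩ J
  have hXc : X ∈ convexHull ℝ (K ∩ J) := by rw [hB]; exact hX
  rw [convexHull_eq] at hXc
  obtain ⟨ι, t, w, z, hw0, hw1, hz, hcm⟩ := hXc
  rw [Finset.centerMass_eq_of_sum_1 _ _ hw1] at hcm
  by_cases hgood : ∃ i ∈ t, 0 < ⟪H, z i⟫ ∧ w i * ⟪Q, z i⟫ ≤ v * (w i * ⟪H, z i⟫) ∧ 0 < w i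
  · obtain ⟨i, hit, hti, hqi, hwi⟩ := hgood
    refine ⟨(⟪H, z i⟫)⁻¹ • z i, ⟨hKcone _ (hz i hit).1 _ (by positivity),
      hJcone _ (hz i hit).2 _ (by positivity)⟩, ?_, ?_⟩
    · rw [real_inner_smul_right]; field_simp
    · rw [real_inner_smul_right]
      rw [inv_mul_le_iff₀ hti]
      have := hqi
      nlinarith [hwi, hti]
  push_neg at hgood
  exfalso
  -- ζ_p(J) is a real number r; every feasible point has value ≥ r
  have hXfeas : ((v : ℝ) : EReal) ∈ (fun X => ((⟪Q, X⟫ : ℝ) : EReal)) '' {X | X ∈ J ∧ ⟪H, X⟫ = 1} :=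
    ⟨X, ⟨hX, hHX⟩, rfl⟩
  have hle : zetaP Q H J ≤ ((v : ℝ) : EReal) := sInf_le hXfeas
  have hne_top : zetaP Q H J ≠ ⊤ := fun h => by simp [h] at hle
  have hne_bot : zetaP Q H J ≠ ⊥ := hlb.ne'
  obtain ⟨r, hr⟩ : ∃ r : ℝ, zetaP Q H J = (r : EReal) := by
    lift zetaP Q H J to ℝ using ⟨hne_top, hne_bot⟩ with r
    exact ⟨r, rfl⟩
  have hlow : ∀ y ∈ J, ⟪H, y⟫ = 1 → r ≤ ⟪Q, y⟫ := by
    intro y hy hy1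
    have : zetaP Q H J ≤ ((⟪Q, y⟫ : ℝ) : EReal) := sInf_le ⟨y, ⟨hy, hy1⟩, rfl⟩
    rw [hr] at this
    exact_mod_cast this
  -- decompose into nonpositive-⟪H,·⟫ part Z
  set tm := t.filter (fun i => ¬ 0 < ⟪H, z i⟫) with htm
  set Z : V := ∑ i ∈ tm, w i • z i with hZ
  have hZJ : Z ∈ J := by
    have h0J : (0 : V) ∈ J := by
      have := hJcone _ hX 0 le_rfl; simpa using this
    refine Finset.sum_induction _ (· ∈ J) (fun a b ha hb => convexCone_add_mem hJconv hJcone ha hb)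
      h0J ?_
    intro i hi
    exact hJcone _ (hz i (Finset.mem_filter.mp hi).1).2 _ (hw0 i (Finset.mem_filter.mp hi).1)
  set Tm : ℝ := ⟪H, Z⟫ with hTm
  set qZ : ℝ := ⟪Q, Z⟫ with hqZ
  have hTmval : Tm = ∑ i ∈ tm, w i * ⟪H, z i⟫ := by
    simp [hTm, hZ, inner_sum, real_inner_smul_right]
  have hqZval : qZ = ∑ i ∈ tm, w i * ⟪Q, z i⟫ := by
    simp [hqZ, hZ, inner_sum, real_inner_smul_right]
  have hTmle : Tm ≤ 0 := by
    rw [hTmval]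
    apply Finset.sum_nonpos
    intro i hi
    have hi' := Finset.mem_filter.mp hi
    have := hw0 i hi'.1
    nlinarith [not_lt.mp hi'.2]
  -- total sums
  have hsumH : ∑ i ∈ t, w i * ⟪H, z i⟫ = 1 := by
    rw [← hHX, ← hcm]; simp [inner_sum, real_inner_smul_right]
  have hsumQ : ∑ i ∈ t, w i * ⟪Q, z i⟫ = v := by
    rw [hv, ← hcm]; simp [inner_sum, real_inner_smul_right]
  -- the positive part gives strictly positive "surplus"
  set tp := t.filter (fun i => 0 < ⟪H, z i⟫) with htp
  have hsplitH : ∑ i ∈ tp, w i * ⟪H, z i⟫ + ∑ i ∈ tm, w i * ⟪H, z i⟫ = 1 := by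
    rw [htp, htm, Finset.sum_filter_add_sum_filter_not]; exact hsumH
  have hsplitQ : ∑ i ∈ tp, w i * ⟪Q, z i⟫ + ∑ i ∈ tm, w i * ⟪Q, z i⟫ = v := by
    rw [htp, htm, Finset.sum_filter_add_sum_filter_not]; exact hsumQ
  have hpos : 0 < ∑ i ∈ tp, (w i * ⟪Q, z i⟫ - v * (w i * ⟪H, z i⟫)) := by
    apply Finset.sum_pos'
    · intro i hi
      have hi' := Finset.mem_filter.mp hi
      rcases eq_or_lt_of_le (hw0 i hi'.1) with h0 | h0
      · simp [← h0]
      · have := hgood i hi'.1 hi'.2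
        have h2 : ¬ w i * ⟪Q, z i⟫ ≤ v * (w i * ⟪H, z i⟫) := fun hc => absurd h0 (by
          simpa using (this hc))
        linarith [lt_of_not_ge h2]
    · -- exists i with w i * ⟪H, z i⟫ > 0
      have : ∃ i ∈ t, 0 < w i * ⟪H, z i⟫ := by
        by_contra hc
        push_neg at hc
        have : ∑ i ∈ t, w i * ⟪H, z i⟫ ≤ 0 := Finset.sum_nonpos hc
        linarith [hsumH ▸ this]
      obtain ⟨i, hit, hi⟩ := this
      have hwi : 0 < w i := by
        rcases (hw0 i hit).lt_or_eq with h | h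
        · exact h
        · exfalso; rw [← h] at hi; simp at hi
      have hti : 0 < ⟪H, z i⟫ := by by_contra hc; push_neg at hc; nlinarith
      exact ⟨i, Finset.mem_filter.mpr ⟨hit, hti⟩, by
        have := hgood i hit hti
        have h2 : ¬ w i * ⟪Q, z i⟫ ≤ v * (w i * ⟪H, z i⟫) := fun hc => absurd hwi (by
          simpa using (this hc))
        linarith [lt_of_not_ge h2]⟩
  -- B = qZ - v * Tm < 0
  have hBneg : qZ - v * Tm < 0 := by
    have h1 : ∑ i ∈ tp, (w i * ⟪Q, z i⟫ - v * (w i * ⟪H, z i⟫))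
        = (v - qZ) - v * (1 - Tm) := by
      rw [Finset.sum_sub_distrib, ← Finset.mul_sum]
      have e1 : ∑ i ∈ tp, w i * ⟪Q, z i⟫ = v - qZ := by rw [hqZval] at *; linarith [hsplitQ]
      have e2 : ∑ i ∈ tp, w i * ⟪H, z i⟫ = 1 - Tm := by rw [hTmval] at *; linarith [hsplitH]
      rw [e1, e2]
    rw [h1] at hpos
    linarith
  set B : ℝ := qZ - v * Tm with hBdef
  -- choose s ≥ 0 with v + s * B < r
  set s : ℝ := max 0 ((r - v) / B + 1) with hs
  have hs0 : 0 ≤ s := le_max_left _ _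
  have hsB : v + s * B < r := by
    have hsgt : (r - v) / B < s := lt_of_lt_of_le (by linarith) (le_max_right _ _)
    calc v + s * B < v + ((r - v) / B) * B := by
          have := mul_lt_mul_of_neg_right hsgt hBneg
          linarith
      _ = r := by field_simp [hBneg.ne]; ring
  -- the feasible point with small objective
  set zb : V := (1 - s * Tm) • X + s • Z with hzb
  have hzbJ : zb ∈ J := convexCone_smul_add_mem hJconv hJcone hX hZJ
    (by nlinarith) hs0
  have hzbH : ⟪H, zb⟫ = 1 := by
    rw [hzb, inner_add_right, real_inner_smul_right, real_inner_smul_right, hHX, ← hTm]; ring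
  have hzbQ : ⟪Q, zb⟫ = v + s * B := by
    rw [hzb, inner_add_right, real_inner_smul_right, real_inner_smul_right, ← hv, ← hqZ, hBdef]
    ring
  have := hlow zb hzbJ hzbH
  rw [hzbQ] at this
  linarith

/-- Corollary 2.1: under Conditions (A)' and (B) (no feasibility of COP(K ∩ J) assumed),
`-∞ < ζ_p(J) < ∞` iff `-∞ < ζ_p(K ∩ J) = ζ_p(J) < ∞`. -/
theorem stmt_5 [FiniteDimensional ℝ V] (Q H : V) (hH : H ≠ 0) (K J : Set V)
    (hKne : K.Nonempty) (hKcone : IsCone K)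
    (hJconv : Convex ℝ J) (hJcone : IsCone J) (hJsub : J ⊆ convexHull ℝ K)
    (hB : convexHull ℝ (K ∩ J) = J) :
    (⊥ < zetaP Q H J ∧ zetaP Q H J < ⊤) ↔
      (⊥ < zetaP Q H (K ∩ J) ∧ zetaP Q H (K ∩ J) = zetaP Q H J ∧ zetaP Q H J < ⊤) := by
  have hmono : zetaP Q H J ≤ zetaP Q H (K ∩ J) := by
    apply sInf_le_sInf
    apply Set.image_mono
    intro x hx
    exact ⟨hx.1.2, hx.2⟩
  constructor
  · rintro ⟨hbot, htop⟩
    have hle : zetaP Q H (K ∩ J) ≤ zetaP Q H J := by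
      apply le_sInf
      rintro b ⟨X, ⟨hXJ, hXH⟩, rfl⟩
      obtain ⟨y, hy, hyH, hyQ⟩ := key_lemma Q H hKcone hJconv hJcone hB hXJ hXH hbot
      show zetaP Q H (K ∩ J) ≤ ((⟪Q, X⟫ : ℝ) : EReal)
      calc zetaP Q H (K ∩ J) ≤ ((⟪Q, y⟫ : ℝ) : EReal) := sInf_le ⟨y, ⟨hy, hyH⟩, rfl⟩
        _ ≤ _ := by exact_mod_cast hyQ
    have heq : zetaP Q H (K ∩ J) = zetaP Q H J := le_antisymm hle hmono
    exact ⟨heq ▸ hbot, heq, htop⟩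
  · rintro ⟨hbot, heq, htop⟩
    exact ⟨heq ▸ hbot, htop⟩
end

section
/- Let J ⊆ V be a closed convex cone with H ∈ J*, and assume that −∞ < ζ_p(J) < +∞ or −∞ < ζ_d(J) < +∞. Then (i) −∞ < ζ_p(J) = ζ_d(J) < +∞ (strong duality holds), and (ii) the dual problem DCOP(J) attains its optimal value, i.e., there exists t̄ ∈ ℝ with Q − t̄H ∈ J* and t̄ = ζ_d(J). -/
open RealInnerProductSpace

variable {V : Type*} [NormedAddCommGroup V] [InnerProductSpace ℝ V]

/-- The dual optimal value `ζ_d(J) = sup {t : Q - t H ∈ J*}` in `[-∞, +∞]`;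
it equals `-∞` when the dual feasible set is empty. -/
noncomputable def zetaD (Q H : V) (J : Set V) : EReal :=
  sSup ((fun t : ℝ => (t : EReal)) '' {t | Q - t • H ∈ dualCone J})

/-!
The dual problem has a single real variable, so strong duality needs no separation argument.
Once the primal problem is feasible with finite value `m`, the number `m` is itself dual feasible:
for `X ∈ J` with `⟨H, X⟩ > 0` this is `m ≤ ⟨Q, X / ⟨H, X⟩⟩`, and for `X ∈ J` with `⟨H, X⟩ = 0`
the ray `X₀ + s X` of primal feasible points shows `⟨Q, X⟩ ≥ 0`, since otherwise the primal
value would be `-∞`. If instead only the dual value is known to be finite, the primal problem is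
still feasible: otherwise `H` vanishes on `J`, and then every `t` is dual feasible as soon as one is.
-/

def primalFeasible (H : V) (C : Set V) : Set V := {X | X ∈ C ∧ ⟪H, X⟫ = 1}

def dualFeasible (Q H : V) (J : Set V) : Set ℝ := {t | Q - t • H ∈ dualCone J}

section

variable {Q H X X₀ Y : V} {C J : Set V} {m t : ℝ}

theorem IsCone.add_mem (hcone : IsCone J) (hconv : Convex ℝ J) (hX : X ∈ J) (hY : Y ∈ J) :
    X + Y ∈ J := by
  have hmid := hconv hX hY (by norm_num : (0 : ℝ) ≤ 1 / 2) (by norm_num : (0 : ℝ) ≤ 1 / 2)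
    (by norm_num)
  simpa [smul_add, smul_smul] using hcone _ hmid 2 zero_le_two

theorem IsCone.inv_inner_smul_mem_primalFeasible (hcone : IsCone C) (hX : X ∈ C)
    (hpos : 0 < ⟪H, X⟫) : ⟪H, X⟫⁻¹ • X ∈ primalFeasible H C :=
  ⟨hcone X hX _ (inv_nonneg.2 hpos.le), by rw [real_inner_smul_right, inv_mul_cancel₀ hpos.ne']⟩

theorem mem_dualFeasible_iff : t ∈ dualFeasible Q H J ↔ ∀ X ∈ J, t * ⟪H, X⟫ ≤ ⟪Q, X⟫ :=
  forall₂_congr fun X _ => by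
    rw [inner_sub_right, real_inner_smul_right, sub_nonneg, real_inner_comm X Q,
      real_inner_comm X H]

theorem le_zetaP_iff : (m : EReal) ≤ zetaP Q H C ↔ ∀ X ∈ primalFeasible H C, m ≤ ⟪Q, X⟫ := by
  simp only [zetaP, le_sInf_iff, Set.forall_mem_image, EReal.coe_le_coe_iff]
  rfl

theorem zetaP_lt_top_iff : zetaP Q H C < ⊤ ↔ (primalFeasible H C).Nonempty := by
  simp only [zetaP, sInf_lt_iff, Set.exists_mem_image, EReal.coe_lt_top, and_true]
  rfl

theorem le_zetaD (ht : t ∈ dualFeasible Q H J) : (t : EReal) ≤ zetaD Q H J :=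
  le_sSup ⟨t, ht, rfl⟩

theorem bot_lt_zetaD_iff : ⊥ < zetaD Q H J ↔ (dualFeasible Q H J).Nonempty := by
  simp only [zetaD, lt_sSup_iff, Set.exists_mem_image, EReal.bot_lt_coe, and_true]
  rfl

theorem zetaD_le_zetaP : zetaD Q H J ≤ zetaP Q H J := by
  refine sSup_le ?_
  rintro _ ⟨t, ht, rfl⟩
  refine le_zetaP_iff.2 fun X hX => ?_
  simpa [hX.2] using mem_dualFeasible_iff.1 ht X hX.1

theorem nonneg_of_forall_le_add_mul {a b m : ℝ} (h : ∀ s : ℝ, 0 ≤ s → m ≤ b + s * a) :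
    0 ≤ a := by
  by_contra! ha
  have hb := h 0 le_rfl
  have hs := h ((b - m + 1) / -a) (div_nonneg (by linarith) (by linarith))
  rw [div_mul_eq_mul_div, div_neg, mul_div_assoc, div_self ha.ne, mul_one] at hs
  linarith

theorem inner_nonneg_of_inner_eq_zero (hconv : Convex ℝ J) (hcone : IsCone J)
    (hX₀ : X₀ ∈ primalFeasible H J) (hm : ∀ X ∈ primalFeasible H J, m ≤ ⟪Q, X⟫) (hX : X ∈ J)
    (hHX : ⟪H, X⟫ = 0) : 0 ≤ ⟪Q, X⟫ := by
  refine nonneg_of_forall_le_add_mul (m := m) (b := ⟪Q, X₀⟫) fun s hs => ?_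
  have hray : X₀ + s • X ∈ primalFeasible H J :=
    ⟨hcone.add_mem hconv hX₀.1 (hcone X hX s hs), by
      rw [inner_add_right, real_inner_smul_right, hHX, hX₀.2, mul_zero, add_zero]⟩
  simpa [inner_add_right, real_inner_smul_right] using hm _ hray

theorem mem_dualFeasible_of_forall_le (hconv : Convex ℝ J) (hcone : IsCone J)
    (hH : H ∈ dualCone J) (hX₀ : X₀ ∈ primalFeasible H J)
    (hm : ∀ X ∈ primalFeasible H J, m ≤ ⟪Q, X⟫) : m ∈ dualFeasible Q H J := by
  refine mem_dualFeasible_iff.2 fun X hX => ?_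
  have hHX : 0 ≤ ⟪H, X⟫ := real_inner_comm H X ▸ hH X hX
  rcases hHX.eq_or_lt with hzero | hpos
  · rw [← hzero, mul_zero]
    exact inner_nonneg_of_inner_eq_zero hconv hcone hX₀ hm hX hzero.symm
  · have hnormal := hm _ (hcone.inv_inner_smul_mem_primalFeasible hX hpos)
    rw [real_inner_smul_right] at hnormal
    rw [mul_comm]
    exact (le_inv_mul_iff₀ hpos).1 hnormal

theorem primalFeasible_nonempty_of_zetaD_lt_top (hcone : IsCone J) (hH : H ∈ dualCone J)
    (hbot : ⊥ < zetaD Q H J) (htop : zetaD Q H J < ⊤) : (primalFeasible H J).Nonempty := by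
  by_contra hempty
  have hHJ : ∀ X ∈ J, ⟪H, X⟫ = 0 := fun X hX =>
    ((real_inner_comm H X ▸ hH X hX).eq_or_lt.resolve_right fun hpos =>
      hempty ⟨_, hcone.inv_inner_smul_mem_primalFeasible hX hpos⟩).symm
  obtain ⟨t₀, ht₀⟩ := bot_lt_zetaD_iff.1 hbot
  have hall : ∀ t, t ∈ dualFeasible Q H J := fun t => mem_dualFeasible_iff.2 fun X hX => by
    simpa [hHJ X hX] using mem_dualFeasible_iff.1 ht₀ X hX
  refine htop.ne (EReal.eq_top_iff_forall_lt _ |>.2 fun y => ?_)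
  exact (EReal.coe_lt_coe_iff.2 (lt_add_one y)).trans_le (le_zetaD (hall _))

end

theorem stmt_6_general (Q H : V) (J : Set V)
    (hJconv : Convex ℝ J) (hJcone : IsCone J)
    (hHdual : H ∈ dualCone J)
    (hfin : (⊥ < zetaP Q H J ∧ zetaP Q H J < ⊤) ∨ (⊥ < zetaD Q H J ∧ zetaD Q H J < ⊤)) :
    (⊥ < zetaP Q H J ∧ zetaP Q H J = zetaD Q H J ∧ zetaP Q H J < ⊤) ∧
      ∃ t : ℝ, Q - t • H ∈ dualCone J ∧ (t : EReal) = zetaD Q H J := by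
  obtain ⟨X₀, hX₀⟩ : (primalFeasible H J).Nonempty := hfin.elim (zetaP_lt_top_iff.1 ·.2)
    fun h => primalFeasible_nonempty_of_zetaD_lt_top hJcone hHdual h.1 h.2
  have hbot : ⊥ < zetaP Q H J := hfin.elim (·.1) fun h => h.1.trans_le zetaD_le_zetaP
  have htop : zetaP Q H J < ⊤ := zetaP_lt_top_iff.2 ⟨X₀, hX₀⟩
  set m := (zetaP Q H J).toReal
  have hm : (m : EReal) = zetaP Q H J := EReal.coe_toReal htop.ne hbot.ne'
  have hmD : m ∈ dualFeasible Q H J :=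
    mem_dualFeasible_of_forall_le hJconv hJcone hHdual hX₀ (le_zetaP_iff.1 hm.le)
  have heq : zetaP Q H J = zetaD Q H J := le_antisymm (hm ▸ le_zetaD hmD) zetaD_le_zetaP
  exact ⟨⟨hbot, heq, htop⟩, m, hmD, hm.trans heq⟩

/-- Theorem 2.1 (i)-(ii): strong duality and dual attainment for a closed convex cone `J`
with `H ∈ J*`, provided one of the primal/dual values is finite. -/
theorem stmt_6 [FiniteDimensional ℝ V] (Q H : V) (hH : H ≠ 0) (J : Set V)
    (hJconv : Convex ℝ J) (hJcone : IsCone J) (hJclosed : IsClosed J)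
    (hHdual : H ∈ dualCone J)
    (hfin : (⊥ < zetaP Q H J ∧ zetaP Q H J < ⊤) ∨ (⊥ < zetaD Q H J ∧ zetaD Q H J < ⊤)) :
    (⊥ < zetaP Q H J ∧ zetaP Q H J = zetaD Q H J ∧ zetaP Q H J < ⊤) ∧
      ∃ t : ℝ, Q - t • H ∈ dualCone J ∧ (t : EReal) = zetaD Q H J :=
  stmt_6_general Q H J hJconv hJcone hHdual hfin
end

section
/- Assume: K ⊆ V is a closed cone; J ⊆ co K is a closed convex cone with co(K ∩ J) = J; the set {X ∈ K ∩ J : ⟨H,X⟩ = 1} is nonempty (COP(K ∩ J) is feasible); H ∈ J*; and there exists t ∈ ℝ with Q − tH ∈ int(J*), the interior of J*. Then −∞ < ζ_d(J) = ζ_p(J) = ζ_p(K ∩ J) < +∞; there exists X* ∈ K ∩ J with ⟨H,X*⟩ = 1 and ⟨Q,X*⟩ = ζ_p(J), so X* is a common optimal solution of COP(K ∩ J) and COP(J); and DCOP(J) attains its optimal value. -/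
open RealInnerProductSpace

variable {V : Type*} [NormedAddCommGroup V] [InnerProductSpace ℝ V]

/-- Theorem 2.2: under closedness of `K` and `J`, `co (K ∩ J) = J`, feasibility of
COP(K ∩ J), `H ∈ J*` and strict dual feasibility, all three optimal values coincide
and are finite, COP(K ∩ J) and COP(J) share a common optimal solution, and DCOP(J)
attains its optimal value. -/
theorem stmt_7 [FiniteDimensional ℝ V] (Q H : V) (hH : H ≠ 0) (K J : Set V)
    (hKcone : IsCone K) (hKclosed : IsClosed K)
    (hJconv : Convex ℝ J) (hJcone : IsCone J) (hJclosed : IsClosed J)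
    (hJsub : J ⊆ convexHull ℝ K) (hB : convexHull ℝ (K ∩ J) = J)
    (hfeas : ∃ X ∈ K ∩ J, ⟪H, X⟫ = 1)
    (hHdual : H ∈ dualCone J)
    (hslater : ∃ t : ℝ, Q - t • H ∈ interior (dualCone J)) :
    (⊥ < zetaD Q H J ∧ zetaD Q H J = zetaP Q H J ∧
      zetaP Q H J = zetaP Q H (K ∩ J) ∧ zetaP Q H (K ∩ J) < ⊤) ∧
    (∃ Xstar ∈ K ∩ J, ⟪H, Xstar⟫ = 1 ∧ ((⟪Q, Xstar⟫ : ℝ) : EReal) = zetaP Q H J) ∧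
    (∃ t : ℝ, Q - t • H ∈ dualCone J ∧ (t : EReal) = zetaD Q H J) := by
  obtain ⟨X₀, hX₀mem, hX₀H⟩ := hfeas
  obtain ⟨t₀, ht₀⟩ := hslater
  -- Slater point gives a coercivity bound on J
  obtain ⟨ε, hεpos, hball⟩ := Metric.mem_nhds_iff.mp
    (isOpen_interior.mem_nhds ht₀)
  set e : ℝ := ε / 2 with he
  have hepos : 0 < e := by positivity
  have hcoer : ∀ X ∈ J, e * ‖X‖ ≤ ⟪X, Q - t₀ • H⟫ := by
    intro X hXJ
    rcases eq_or_ne X 0 with rfl | hX0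
    · simp
    · have hnX : 0 < ‖X‖ := norm_pos_iff.mpr hX0
      set c : ℝ := e / ‖X‖ with hc
      have hY : (Q - t₀ • H) - c • X ∈ dualCone J := by
        apply interior_subset
        apply hball
        have : dist ((Q - t₀ • H) - c • X) (Q - t₀ • H) = c * ‖X‖ := by
          rw [dist_eq_norm]
          have : (Q - t₀ • H) - c • X - (Q - t₀ • H) = -(c • X) := by abel
          rw [this, norm_neg, norm_smul, Real.norm_eq_abs,
            abs_of_nonneg (by positivity)]
        rw [Metric.mem_ball, this, hc, div_mul_cancel₀ _ (ne_of_gt hnX)]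
        linarith
      have h0 := hY X hXJ
      rw [inner_sub_right, real_inner_smul_right, real_inner_self_eq_norm_mul_norm] at h0
      have : c * (‖X‖ * ‖X‖) = e * ‖X‖ := by
        rw [hc, ← mul_assoc, div_mul_cancel₀ _ (ne_of_gt hnX)]
      linarith
  -- the compact sublevel feasible set
  set c₀ : ℝ := ⟪Q, X₀⟫ with hc₀
  set S : Set V := {X | (X ∈ K ∩ J ∧ ⟪H, X⟫ = 1) ∧ ⟪Q, X⟫ ≤ c₀} with hS
  have hinnercont : ∀ W : V, Continuous fun X : V => (⟪W, X⟫ : ℝ) :=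
    fun W => continuous_const.inner continuous_id
  have hSclosed : IsClosed S := by
    apply IsClosed.inter
    · exact ((hKclosed.inter hJclosed).inter
        (isClosed_eq (hinnercont H) continuous_const))
    · exact isClosed_le (hinnercont Q) continuous_const
  have hSbdd : Bornology.IsBounded S := by
    apply (Metric.isBounded_closedBall (x := (0 : V)) (r := (c₀ - t₀) / e)).subset
    rintro X ⟨⟨⟨hXK, hXJ⟩, hXH⟩, hXQ⟩
    rw [Metric.mem_closedBall, dist_zero_right]
    have h1 := hcoer X hXJ
    rw [inner_sub_right, real_inner_smul_right, real_inner_comm H X, hXH,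
      real_inner_comm Q X] at h1
    rw [le_div_iff₀ hepos]
    linarith
  have hSne : S.Nonempty := ⟨X₀, ⟨hX₀mem, hX₀H⟩, le_refl _⟩
  obtain ⟨Xs, hXsS, hXsmin⟩ :=
    (Metric.isCompact_of_isClosed_isBounded hSclosed hSbdd).exists_isMinOn hSne
      (hinnercont Q).continuousOn
  obtain ⟨⟨⟨hXsK, hXsJ⟩, hXsH⟩, hXsQ⟩ := hXsS
  set m : ℝ := ⟪Q, Xs⟫ with hm
  -- Xs minimizes over the whole feasible set of K ∩ J
  have hmin : ∀ X ∈ K ∩ J, ⟪H, X⟫ = 1 → m ≤ ⟪Q, X⟫ := by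
    intro X hXmem hXH
    by_cases h : ⟪Q, X⟫ ≤ c₀
    · exact hXsmin ⟨⟨hXmem, hXH⟩, h⟩
    · push_neg at h; linarith
  -- Q - m • H lies in the dual cone of K ∩ J, hence of J
  have hdualJ : Q - m • H ∈ dualCone J := by
    rw [← hB]
    have hsub : K ∩ J ⊆ {X | 0 ≤ ⟪X, Q - m • H⟫} := by
      rintro Z ⟨hZK, hZJ⟩
      have hh : 0 ≤ ⟪H, Z⟫ := by
        have := hHdual Z hZJ; rwa [real_inner_comm] at this
      rcases hh.eq_or_lt with heq | hlt
      · have h1 := hcoer Z hZJ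
        have h2 : 0 ≤ e * ‖Z‖ := by positivity
        simp only [Set.mem_setOf_eq, inner_sub_right, real_inner_smul_right] at h1 ⊢
        rw [real_inner_comm H Z, ← heq] at h1 ⊢
        linarith
      · set h : ℝ := ⟪H, Z⟫ with hhdef
        have hWmem : h⁻¹ • Z ∈ K ∩ J :=
          ⟨hKcone Z hZK h⁻¹ (by positivity), hJcone Z hZJ h⁻¹ (by positivity)⟩
        have hWH : ⟪H, h⁻¹ • Z⟫ = 1 := by
          rw [real_inner_smul_right, ← hhdef, inv_mul_cancel₀ (ne_of_gt hlt)]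
        have := hmin _ hWmem hWH
        rw [real_inner_smul_right] at this
        have h3 : m * h ≤ ⟪Q, Z⟫ := by
          rw [mul_comm]
          calc h * m ≤ h * (h⁻¹ * ⟪Q, Z⟫) := by
                exact mul_le_mul_of_nonneg_left this (le_of_lt hlt)
            _ = ⟪Q, Z⟫ := by field_simp
        simp only [Set.mem_setOf_eq, inner_sub_right, real_inner_smul_right]
        rw [real_inner_comm Q Z, real_inner_comm H Z, ← hhdef]
        linarith
    have hconv : Convex ℝ {X : V | 0 ≤ ⟪X, Q - m • H⟫} := by
      intro x hx y hy a b ha hb hab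
      simp only [Set.mem_setOf_eq, inner_add_left, real_inner_smul_left] at *
      have := add_le_add (mul_le_mul_of_nonneg_left hx ha)
        (mul_le_mul_of_nonneg_left hy hb)
      simpa using this
    exact fun X hX => convexHull_min hsub hconv hX
  have hQge : ∀ X ∈ J, ⟪H, X⟫ = 1 → m ≤ ⟪Q, X⟫ := by
    intro X hXJ hXH
    have := hdualJ X hXJ
    rw [inner_sub_right, real_inner_smul_right, real_inner_comm H X, hXH,
      real_inner_comm Q X] at this
    linarith
  -- the three values
  have hPJ : zetaP Q H J = (m : EReal) := by
    apply le_antisymm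
    · exact sInf_le ⟨Xs, ⟨hXsJ, hXsH⟩, rfl⟩
    · apply le_sInf
      rintro _ ⟨X, ⟨hXJ, hXH⟩, rfl⟩
      show (m : EReal) ≤ ((⟪Q, X⟫ : ℝ) : EReal)
      exact_mod_cast hQge X hXJ hXH
  have hPKJ : zetaP Q H (K ∩ J) = (m : EReal) := by
    apply le_antisymm
    · exact sInf_le ⟨Xs, ⟨⟨hXsK, hXsJ⟩, hXsH⟩, rfl⟩
    · apply le_sInf
      rintro _ ⟨X, ⟨hXmem, hXH⟩, rfl⟩
      show (m : EReal) ≤ ((⟪Q, X⟫ : ℝ) : EReal)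
      exact_mod_cast hmin X hXmem hXH
  have hD : zetaD Q H J = (m : EReal) := by
    apply le_antisymm
    · apply sSup_le
      rintro _ ⟨t, ht, rfl⟩
      show (t : EReal) ≤ (m : EReal)
      rw [EReal.coe_le_coe_iff]
      have := ht Xs hXsJ
      rw [inner_sub_right, real_inner_smul_right, real_inner_comm H Xs, hXsH,
        real_inner_comm Q Xs] at this
      linarith
    · exact le_sSup ⟨m, hdualJ, rfl⟩
  refine ⟨⟨?_, ?_, ?_, ?_⟩, ⟨Xs, ⟨hXsK, hXsJ⟩, hXsH, ?_⟩, ⟨m, hdualJ, ?_⟩⟩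
  · rw [hD]; exact EReal.bot_lt_coe m
  · rw [hD, hPJ]
  · rw [hPJ, hPKJ]
  · rw [hPKJ]; exact EReal.coe_lt_top m
  · rw [hPJ]
  · rw [hD]
end

section
/- Let K ⊆ V be a nonempty cone, let J ∈ F̂(K), and let F be a face of J. Then F ∈ F̂(K); that is, F ⊆ co K and co(K ∩ F) = F. -/
open RealInnerProductSpace

variable {V : Type*} [NormedAddCommGroup V] [InnerProductSpace ℝ V]

/-- `F̂(K)`: the family of all convex cones `J ⊆ co K` with `co (K ∩ J) = J`. -/
def Fhat (K : Set V) : Set (Set V) :=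
  {J | Convex ℝ J ∧ IsCone J ∧ J ⊆ convexHull ℝ K ∧ convexHull ℝ (K ∩ J) = J}

/-- `F` is a face of the convex cone `C`: `F` is a convex cone contained in `C`, and
whenever a finite sum of elements of `C` lies in `F`, each summand lies in `F`. -/
def IsFace (C F : Set V) : Prop :=
  F ⊆ C ∧ Convex ℝ F ∧ IsCone F ∧
    ∀ (m : ℕ) (X : Fin m → V), (∀ k, X k ∈ C) → (∑ k, X k) ∈ F → ∀ k, X k ∈ F

/-
A point of `F` is a positive combination of points of `K ∩ J`; each summand lies in the cone `J`
and the sum lies in the face `F`, so every summand, hence every point used, lies in `K ∩ F`.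
-/

theorem IsCone.mem_of_smul_mem {C : Set V} (hC : IsCone C) {c : ℝ} (hc : 0 < c) {x : V}
    (h : c • x ∈ C) : x ∈ C := by
  simpa [smul_smul, inv_mul_cancel₀ hc.ne'] using hC _ h c⁻¹ (inv_nonneg.2 hc.le)

theorem IsFace.mem_of_sum_mem {C F : Set V} (hF : IsFace C F) {ι : Type*} [Fintype ι]
    (X : ι → V) (hX : ∀ i, X i ∈ C) (hsum : ∑ i, X i ∈ F) (i : ι) : X i ∈ F := by
  let e := Fintype.equivFin ι
  have hsum' : ∑ k, X (e.symm k) ∈ F := by rwa [e.symm.sum_comp X]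
  simpa using hF.2.2.2 _ (X ∘ e.symm) (fun k => hX _) hsum' (e i)

theorem IsFace.convexHull_inter_subset {C F S : Set V} (hC : IsCone C) (hF : IsFace C F)
    (hS : S ⊆ C) : convexHull ℝ S ∩ F ⊆ convexHull ℝ (S ∩ F) := by
  rintro x ⟨hxS, hxF⟩
  obtain ⟨ι, _, z, w, hzS, -, hw, hw1, rfl⟩ := eq_pos_convex_span_of_mem_convexHull hxS
  have hzC (i : ι) : z i ∈ C := hS (hzS ⟨i, rfl⟩)
  have hwzF (i : ι) : w i • z i ∈ F :=
    hF.mem_of_sum_mem _ (fun j => hC _ (hzC j) _ (hw j).le) hxF i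
  have hzF (i : ι) : z i ∈ F := hF.2.2.1.mem_of_smul_mem (hw i) (hwzF i)
  exact (convex_convexHull ℝ _).sum_mem (fun i _ => (hw i).le) hw1
    fun i _ => subset_convexHull ℝ _ ⟨hzS ⟨i, rfl⟩, hzF i⟩

theorem stmt_8_general (K J F : Set V)
    (hJ : J ∈ Fhat K) (hF : IsFace J F) :
    F ∈ Fhat K := by
  obtain ⟨-, hJcone, hJsub, hJeq⟩ := hJ
  have ⟨hFJ, hFconv, hFcone, _⟩ := hF
  refine ⟨hFconv, hFcone, hFJ.trans hJsub,
    (convexHull_min Set.inter_subset_right hFconv).antisymm fun x hx => ?_⟩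
  have hx' : x ∈ convexHull ℝ (K ∩ J) ∩ F := ⟨by rw [hJeq]; exact hFJ hx, hx⟩
  have hKJF : K ∩ J ∩ F = K ∩ F := by rw [Set.inter_assoc, Set.inter_eq_right.2 hFJ]
  exact hKJF ▸ hF.convexHull_inter_subset hJcone Set.inter_subset_right hx'

/-- Theorem 3.1 (i): every face `F` of `J ∈ F̂(K)` belongs to `F̂(K)`. -/
theorem stmt_8 [FiniteDimensional ℝ V] (K J F : Set V)
    (hKne : K.Nonempty) (hKcone : IsCone K)
    (hJ : J ∈ Fhat K) (hF : IsFace J F) :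
    F ∈ Fhat K :=
  stmt_8_general K J F hJ hF
end

section
/- Let K ⊆ V be a nonempty cone, let J ∈ F̂(K), and let F be an extreme ray of J, i.e., a face of J whose linear span is a one-dimensional subspace of V. Then F ⊆ K. -/
/-!
Write a nonzero `x ∈ F` as a conic combination `x = ∑ wᵢ zᵢ` of points `zᵢ ∈ K ∩ J`, using
`J = co (K ∩ J)` and that `J` is a cone. Each summand `wᵢ zᵢ` lies in `J`, so the face property
puts it in `F`, which lies on the line through `x`: `wᵢ zᵢ = tᵢ x`. Summing gives `∑ tᵢ = 1`, so
some `tᵢ > 0`, and then `x = (wᵢ / tᵢ) zᵢ ∈ K`.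
-/

open RealInnerProductSpace

variable {V : Type*} [NormedAddCommGroup V] [InnerProductSpace ℝ V]

section LinearAlgebra

variable {E : Type*} [AddCommGroup E] [Module ℝ E]

theorem exists_smul_eq_of_finrank_span_eq_one {S : Set E}
    (hS : Module.finrank ℝ (Submodule.span ℝ S) = 1) {x y : E} (hx : x ∈ S) (hx0 : x ≠ 0)
    (hy : y ∈ S) : ∃ t : ℝ, t • x = y := by
  have hx' : (⟨x, Submodule.subset_span hx⟩ : Submodule.span ℝ S) ≠ 0 := by
    simpa using hx0
  obtain ⟨t, ht⟩ := (finrank_eq_one_iff_of_nonzero' _ hx').mp hS ⟨y, Submodule.subset_span hy⟩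
  exact ⟨t, congrArg Subtype.val ht⟩

theorem exists_pos_of_sum_smul_eq_self {ι : Type*} [Fintype ι] {x : E} (hx0 : x ≠ 0)
    {t : ι → ℝ} (h : ∑ i, t i • x = x) : ∃ i, 0 < t i := by
  have hsum : ∑ i, t i = 1 := by
    apply smul_left_injective ℝ hx0
    simpa only [Finset.sum_smul, one_smul] using h
  by_contra! hnonpos
  linarith [Finset.sum_nonpos fun i (_ : i ∈ Finset.univ) => hnonpos i]

end LinearAlgebra

theorem IsCone.mem_of_smul_mem_s10 {K : Set V} (hK : IsCone K) {t : ℝ} (ht : 0 < t) {x : V}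
    (hx : t • x ∈ K) : x ∈ K := by
  simpa [smul_smul, ht.ne'] using hK _ hx t⁻¹ (inv_nonneg.mpr ht.le)

theorem IsFace.forall_mem_of_sum_mem {C F : Set V} (hF : IsFace C F) {ι : Type*} [Fintype ι]
    {X : ι → V} (hX : ∀ i, X i ∈ C) (hsum : ∑ i, X i ∈ F) (i : ι) : X i ∈ F := by
  let e := Fintype.equivFin ι
  have hsum' : ∑ k, X (e.symm k) ∈ F := by rwa [e.symm.sum_comp X]
  simpa using hF.2.2.2 _ (X ∘ e.symm) (fun k => hX _) hsum' (e i)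

theorem stmt_10_general (K J F : Set V)
    (hKne : K.Nonempty) (hKcone : IsCone K)
    (hJ : J ∈ Fhat K) (hF : IsFace J F)
    (hray : Module.finrank ℝ (Submodule.span ℝ F) = 1) :
    F ⊆ K := by
  obtain ⟨-, hJcone, -, hJhull⟩ := hJ
  intro x hxF
  rcases eq_or_ne x 0 with rfl | hx0
  · obtain ⟨y, hy⟩ := hKne
    simpa using hKcone y hy 0 le_rfl
  have hxJ : x ∈ convexHull ℝ (K ∩ J) := by rw [hJhull]; exact hF.1 hxF
  obtain ⟨ι, _, w, z, hw₀, -, hz, hx⟩ := mem_convexHull_iff_exists_fintype.mp hxJ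
  have hwzF : ∀ i, w i • z i ∈ F :=
    hF.forall_mem_of_sum_mem (fun i => hJcone _ (hz i).2 _ (hw₀ i)) (hx ▸ hxF)
  choose t ht using fun i => exists_smul_eq_of_finrank_span_eq_one hray hxF hx0 (hwzF i)
  obtain ⟨i, hti⟩ := exists_pos_of_sum_smul_eq_self hx0 (t := t) (by simp only [ht, hx])
  exact hKcone.mem_of_smul_mem_s10 hti (ht i ▸ hKcone _ (hz i).1 _ (hw₀ i))

/-- Theorem 3.1 (iii): every extreme ray `F` of `J ∈ F̂(K)` (a face of `J` spanning a
one-dimensional linear subspace) is contained in `K`. -/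
theorem stmt_10 [FiniteDimensional ℝ V] (K J F : Set V)
    (hKne : K.Nonempty) (hKcone : IsCone K)
    (hJ : J ∈ Fhat K) (hF : IsFace J F)
    (hray : Module.finrank ℝ (Submodule.span ℝ F) = 1) :
    F ⊆ K :=
  stmt_10_general K J F hKne hKcone hJ hF hray
end

section
/- Let K ⊆ V be a nonempty cone and let 𝒻 ⊆ F̂(K) be any family. Then co(⋃_{F ∈ 𝒻}(K ∩ F)) = co(K ∩ co(⋃_{F ∈ 𝒻} F)) = co(⋃_{F ∈ 𝒻} F); in particular, co(⋃_{F ∈ 𝒻} F) ∈ F̂(K). -/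
/-!
Every member `F` of the family is the convex hull of `K ∩ F`, so the union `U` of the family lies
in `co (K ∩ U)`. Hence `co (K ∩ U) ⊆ co (K ∩ co U) ⊆ co U ⊆ co (K ∩ U)`, and `K ∩ U` is the union
of the traces `K ∩ F`.
-/

open RealInnerProductSpace Pointwise

variable {V : Type*} [NormedAddCommGroup V] [InnerProductSpace ℝ V]

section ConvexHull

variable {𝕜 E : Type*} [Semiring 𝕜] [PartialOrder 𝕜] [AddCommMonoid E] [Module 𝕜 E]

theorem sUnion_subset_convexHull_inter {K : Set E} {𝓕 : Set (Set E)}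
    (h𝓕 : ∀ F ∈ 𝓕, F ⊆ convexHull 𝕜 (K ∩ F)) : ⋃₀ 𝓕 ⊆ convexHull 𝕜 (K ∩ ⋃₀ 𝓕) := by
  rintro x ⟨F, hF, hx⟩
  exact convexHull_mono (Set.inter_subset_inter_right K (Set.subset_sUnion_of_mem hF)) (h𝓕 F hF hx)

theorem convexHull_inter_eq {K S : Set E} (hS : S ⊆ convexHull 𝕜 (K ∩ S)) :
    convexHull 𝕜 (K ∩ S) = convexHull 𝕜 S :=
  (convexHull_mono Set.inter_subset_right).antisymm (convexHull_min hS (convex_convexHull 𝕜 _))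

theorem convexHull_inter_convexHull_eq {K S : Set E} (hS : S ⊆ convexHull 𝕜 (K ∩ S)) :
    convexHull 𝕜 (K ∩ convexHull 𝕜 S) = convexHull 𝕜 S := by
  refine (convexHull_min Set.inter_subset_right (convex_convexHull 𝕜 S)).antisymm ?_
  calc convexHull 𝕜 S = convexHull 𝕜 (K ∩ S) := (convexHull_inter_eq hS).symm
    _ ⊆ convexHull 𝕜 (K ∩ convexHull 𝕜 S) :=
      convexHull_mono (Set.inter_subset_inter_right K (subset_convexHull 𝕜 S))

end ConvexHull

theorem IsCone.sUnion {𝓕 : Set (Set V)} (h𝓕 : ∀ F ∈ 𝓕, IsCone F) : IsCone (⋃₀ 𝓕) := by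
  rintro x ⟨F, hF, hx⟩ l hl
  exact ⟨F, hF, h𝓕 F hF x hx l hl⟩

theorem IsCone.convexHull {C : Set V} (hC : IsCone C) : IsCone (convexHull ℝ C) := by
  intro x hx l hl
  have hlx : l • x ∈ _root_.convexHull ℝ (l • C) := by
    rw [convexHull_smul]
    exact Set.smul_mem_smul_set hx
  refine convexHull_mono ?_ hlx
  rintro _ ⟨y, hy, rfl⟩
  exact hC y hy l hl

theorem stmt_11_general (K : Set V)
    (𝓕 : Set (Set V)) (h𝓕 : 𝓕 ⊆ Fhat K) :
    convexHull ℝ (⋃ F ∈ 𝓕, K ∩ F) = convexHull ℝ (K ∩ convexHull ℝ (⋃₀ 𝓕)) ∧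
    convexHull ℝ (K ∩ convexHull ℝ (⋃₀ 𝓕)) = convexHull ℝ (⋃₀ 𝓕) ∧
    convexHull ℝ (⋃₀ 𝓕) ∈ Fhat K := by
  have hU : ⋃₀ 𝓕 ⊆ convexHull ℝ (K ∩ ⋃₀ 𝓕) :=
    sUnion_subset_convexHull_inter fun F hF => (h𝓕 hF).2.2.2.superset
  have hco : convexHull ℝ (K ∩ convexHull ℝ (⋃₀ 𝓕)) = convexHull ℝ (⋃₀ 𝓕) :=
    convexHull_inter_convexHull_eq hU
  have htraces : ⋃ F ∈ 𝓕, K ∩ F = K ∩ ⋃₀ 𝓕 := by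
    rw [Set.sUnion_eq_biUnion, Set.inter_iUnion₂]
  refine ⟨?_, hco, convex_convexHull ℝ _, ?_, ?_, hco⟩
  · rw [htraces, hco, convexHull_inter_eq hU]
  · exact (IsCone.sUnion fun F hF => (h𝓕 hF).2.1).convexHull
  · exact convexHull_min (Set.sUnion_subset fun F hF => (h𝓕 hF).2.2.1) (convex_convexHull ℝ K)

/-- Theorem 3.1 (v): for every family `𝓕 ⊆ F̂(K)`,
`co (⋃_{F ∈ 𝓕} (K ∩ F)) = co (K ∩ co (⋃ 𝓕)) = co (⋃ 𝓕)`;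
in particular `co (⋃ 𝓕) ∈ F̂(K)`. -/
theorem stmt_11 [FiniteDimensional ℝ V] (K : Set V)
    (hKne : K.Nonempty) (hKcone : IsCone K)
    (𝓕 : Set (Set V)) (h𝓕 : 𝓕 ⊆ Fhat K) :
    convexHull ℝ (⋃ F ∈ 𝓕, K ∩ F) = convexHull ℝ (K ∩ convexHull ℝ (⋃₀ 𝓕)) ∧
    convexHull ℝ (K ∩ convexHull ℝ (⋃₀ 𝓕)) = convexHull ℝ (⋃₀ 𝓕) ∧
    convexHull ℝ (⋃₀ 𝓕) ∈ Fhat K :=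
  stmt_11_general K 𝓕 h𝓕
end

section
/- Let B₁,…,B_m ∈ Sⁿ and set J₋ = ⋂_{ℓ=1}^m J₋(B_ℓ). Assume that J₀(B_k) ⊆ J₋ for every k = 1,…,m. Then J₋ ∈ F̂(K); that is, co(K ∩ J₋) = J₋, where K = {xxᵀ : x ∈ ℝⁿ}. -/
open Matrix

/-- The cone `K = {x xᵀ : x ∈ ℝⁿ}` of rank-at-most-one PSD matrices. -/
def Kcone (n : ℕ) : Set (Matrix (Fin n) (Fin n) ℝ) :=
  {X | ∃ x : Fin n → ℝ, X = vecMulVec x x}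

/-- `J₀(B) = {X ∈ Sⁿ₊ : ⟨B, X⟩ = 0}` with inner product `⟨B, X⟩ = trace (B X)`. -/
def J0 {n : ℕ} (B : Matrix (Fin n) (Fin n) ℝ) : Set (Matrix (Fin n) (Fin n) ℝ) :=
  {X | X.PosSemidef ∧ (B * X).trace = 0}

/-- `J₋ = ⋂_ℓ J₋(B_ℓ) = {X ∈ Sⁿ₊ : ⟨B_ℓ, X⟩ ≤ 0 for all ℓ}`. -/
def Jminus {n m : ℕ} (B : Fin m → Matrix (Fin n) (Fin n) ℝ) :
    Set (Matrix (Fin n) (Fin n) ℝ) :=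
  {X | X.PosSemidef ∧ ∀ l, ((B l) * X).trace ≤ 0}

namespace Stmt15Aux

open Finset Pointwise

variable {n m : ℕ}

lemma vmv_psd (x : Fin n → ℝ) : (vecMulVec x x).PosSemidef := by
  constructor
  · ext i j
    simp [vecMulVec_apply, conjTranspose_apply, mul_comm]
  · simpa using (posSemidef_vecMulVec_self_star x).2

lemma tmul_smul (B X : Matrix (Fin n) (Fin n) ℝ) (c : ℝ) :
    (B * (c • X)).trace = c * (B * X).trace := by
  rw [mul_smul_comm, trace_smul, smul_eq_mul]

lemma tmul_sum {ι : Type*} (B : Matrix (Fin n) (Fin n) ℝ) (s : Finset ι)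
    (f : ι → Matrix (Fin n) (Fin n) ℝ) :
    (B * ∑ i ∈ s, f i).trace = ∑ i ∈ s, (B * f i).trace := by
  rw [Finset.mul_sum, trace_sum]

lemma tmul_add (B X Y : Matrix (Fin n) (Fin n) ℝ) :
    (B * (X + Y)).trace = (B * X).trace + (B * Y).trace := by
  rw [mul_add, trace_add]

lemma vmv_smul (x : Fin n → ℝ) (c : ℝ) :
    vecMulVec (c • x) (c • x) = (c * c) • vecMulVec x x := by
  ext i j; simp [vecMulVec_apply, smul_eq_mul]; ring

lemma psd_decomp {X : Matrix (Fin n) (Fin n) ℝ} (hX : X.PosSemidef) :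
    ∃ y : Fin n → Fin n → ℝ, X = ∑ i, vecMulVec (y i) (y i) := by
  open scoped MatrixOrder in obtain ⟨A, rfl⟩ := CStarAlgebra.nonneg_iff_eq_star_mul_self.mp hX.nonneg
  refine ⟨fun i => A i, ?_⟩
  ext j k
  rw [Matrix.sum_apply]
  simp [Matrix.mul_apply, star_eq_conjTranspose, conjTranspose_apply, vecMulVec_apply]

lemma psd_smul {X : Matrix (Fin n) (Fin n) ℝ} (hX : X.PosSemidef) {c : ℝ} (hc : 0 ≤ c) :
    (c • X).PosSemidef := by
  constructor
  · unfold Matrix.IsHermitian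
    rw [conjTranspose_smul, hX.1]
    simp
  · exact (hX.smul hc).2

lemma smul_mem_S (B : Fin m → Matrix (Fin n) (Fin n) ℝ) {c : ℝ} (hc : 0 ≤ c)
    {X : Matrix (Fin n) (Fin n) ℝ} (hX : X ∈ Kcone n ∩ Jminus B) :
    c • X ∈ Kcone n ∩ Jminus B := by
  obtain ⟨⟨x, rfl⟩, hpsd, htr⟩ := hX
  refine ⟨⟨Real.sqrt c • x, ?_⟩, psd_smul hpsd hc, fun l => ?_⟩
  · rw [vmv_smul, Real.mul_self_sqrt hc]
  · rw [tmul_smul]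
    exact mul_nonpos_of_nonneg_of_nonpos hc (htr l)

lemma zero_mem_S (B : Fin m → Matrix (Fin n) (Fin n) ℝ) :
    (0 : Matrix (Fin n) (Fin n) ℝ) ∈ Kcone n ∩ Jminus B := by
  refine ⟨⟨0, ?_⟩, Matrix.PosSemidef.zero, fun l => by simp⟩
  ext i j; simp [vecMulVec_apply]

lemma hull_smul (B : Fin m → Matrix (Fin n) (Fin n) ℝ) {c : ℝ} (hc : 0 ≤ c)
    {X : Matrix (Fin n) (Fin n) ℝ} (hX : X ∈ convexHull ℝ (Kcone n ∩ Jminus B)) :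
    c • X ∈ convexHull ℝ (Kcone n ∩ Jminus B) := by
  have h1 : c • X ∈ c • convexHull ℝ (Kcone n ∩ Jminus B) :=
    Set.smul_mem_smul_set hX
  rw [← convexHull_smul] at h1
  refine convexHull_mono ?_ h1
  rintro Y ⟨Z, hZ, rfl⟩
  exact smul_mem_S B hc hZ

lemma hull_add (B : Fin m → Matrix (Fin n) (Fin n) ℝ)
    {X Y : Matrix (Fin n) (Fin n) ℝ}
    (hX : X ∈ convexHull ℝ (Kcone n ∩ Jminus B))
    (hY : Y ∈ convexHull ℝ (Kcone n ∩ Jminus B)) :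
    X + Y ∈ convexHull ℝ (Kcone n ∩ Jminus B) := by
  have hmid : (1/2 : ℝ) • X + (1/2 : ℝ) • Y ∈ convexHull ℝ (Kcone n ∩ Jminus B) :=
    (convex_convexHull ℝ _) hX hY (by norm_num) (by norm_num) (by norm_num)
  have := hull_smul B (by norm_num : (0:ℝ) ≤ 2) hmid
  convert this using 1
  module

lemma sum_mem_hull (B : Fin m → Matrix (Fin n) (Fin n) ℝ)
    (z : Fin n → Fin n → ℝ)
    (hz : ∀ i, vecMulVec (z i) (z i) ∈ Jminus B) :
    (∑ i, vecMulVec (z i) (z i)) ∈ convexHull ℝ (Kcone n ∩ Jminus B) := by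
  apply Finset.sum_induction _ (fun X => X ∈ convexHull ℝ (Kcone n ∩ Jminus B))
  · intro a b ha hb; exact hull_add B ha hb
  · exact subset_convexHull ℝ _ (zero_mem_S B)
  · intro i _
    exact subset_convexHull ℝ _ ⟨⟨z i, rfl⟩, hz i⟩

lemma psd_sum_vmv (y : Fin n → Fin n → ℝ) :
    (∑ i, vecMulVec (y i) (y i)).PosSemidef := by
  apply Finset.sum_induction _ (fun X : Matrix (Fin n) (Fin n) ℝ => X.PosSemidef)
  · intro a b ha hb; exact ha.add hb
  · exact Matrix.PosSemidef.zero
  · intro i _; exact vmv_psd (y i)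

lemma rot_id (c s : ℝ) (hcs : c ^ 2 + s ^ 2 = 1) (x w : Fin n → ℝ) :
    vecMulVec (c • x + s • w) (c • x + s • w)
      + vecMulVec ((-s) • x + c • w) ((-s) • x + c • w)
      = vecMulVec x x + vecMulVec w w := by
  ext i j
  simp only [Matrix.add_apply, vecMulVec_apply, Pi.add_apply, Pi.smul_apply, smul_eq_mul]
  linear_combination (x i * x j + w i * w j) * hcs

lemma sum_update_pair {M : Type*} [AddCommGroup M] (y : Fin n → Fin n → ℝ)
    (p q : Fin n) (hpq : p ≠ q) (u v : Fin n → ℝ) (F : (Fin n → ℝ) → M) :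
    ∑ i, F (Function.update (Function.update y p u) q v i)
      = ∑ i, F (y i) + (F u + F v - F (y p) - F (y q)) := by
  have hq : q ∈ (univ : Finset (Fin n)).erase p := by
    simp [Finset.mem_erase, hpq.symm]
  have key : ∀ g : Fin n → M,
      ∑ i, g i = g p + (g q + ∑ i ∈ ((univ : Finset (Fin n)).erase p).erase q, g i) := by
    intro g
    rw [Finset.add_sum_erase _ g hq, Finset.add_sum_erase _ g (mem_univ p)]
  rw [key, key (fun i => F (y i))]
  have h1 : Function.update (Function.update y p u) q v p = u := by
    rw [Function.update_of_ne hpq, Function.update_self]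
  have h2 : Function.update (Function.update y p u) q v q = v := by
    rw [Function.update_self]
  have h3 : ∀ i ∈ ((univ : Finset (Fin n)).erase p).erase q,
      Function.update (Function.update y p u) q v i = y i := by
    intro i hi
    simp only [Finset.mem_erase] at hi
    rw [Function.update_of_ne hi.1, Function.update_of_ne hi.2.1]
  rw [h1, h2, Finset.sum_congr rfl (fun i hi => by rw [h3 i hi])]
  abel

lemma trace_mul_vmv (B : Matrix (Fin n) (Fin n) ℝ) (v : Fin n → ℝ) :
    (B * vecMulVec v v).trace = ∑ i, ∑ k, B i k * (v k * v i) := by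
  simp [Matrix.trace, Matrix.mul_apply, vecMulVec_apply, Matrix.diag]

lemma cont_f (B : Matrix (Fin n) (Fin n) ℝ) (x w : Fin n → ℝ) :
    Continuous (fun α : ℝ =>
      (B * vecMulVec (Real.cos α • x + Real.sin α • w)
        (Real.cos α • x + Real.sin α • w)).trace) := by
  simp only [trace_mul_vmv, Pi.add_apply, Pi.smul_apply, smul_eq_mul]
  apply continuous_finset_sum
  intro i _
  apply continuous_finset_sum
  intro k _
  fun_prop

lemma exists_neg_partner (b : Fin n → ℝ) (hsum : ∑ i, b i ≤ 0) {p : Fin n}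
    (hp : 0 < b p) : ∃ q, q ≠ p ∧ b q < 0 := by
  have hps : b p + ∑ i ∈ univ.erase p, b i = ∑ i, b i :=
    Finset.add_sum_erase _ b (mem_univ p)
  by_contra hcon
  push_neg at hcon
  have : (0:ℝ) ≤ ∑ i ∈ univ.erase p, b i := by
    apply Finset.sum_nonneg
    intro i hi
    exact hcon i (Finset.mem_erase.mp hi).1
  linarith

/-- Sturm–Zhang style rotation lemma: a sum of rank-one matrices with total
`⟨B,·⟩ = 0` can be rewritten as a sum of rank-one matrices each with `⟨B,·⟩ = 0`. -/
lemma SZ (Bk : Matrix (Fin n) (Fin n) ℝ) :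
    ∀ N : ℕ, ∀ y : Fin n → Fin n → ℝ,
      ((univ : Finset (Fin n)).filter
        (fun i => (Bk * vecMulVec (y i) (y i)).trace ≠ 0)).card ≤ N →
      (Bk * ∑ i, vecMulVec (y i) (y i)).trace = 0 →
      ∃ z : Fin n → Fin n → ℝ,
        (∑ i, vecMulVec (z i) (z i)) = ∑ i, vecMulVec (y i) (y i) ∧
        ∀ i, (Bk * vecMulVec (z i) (z i)).trace = 0 := by
  intro N
  induction N with
  | zero =>
    intro y hcard _
    refine ⟨y, rfl, fun i => ?_⟩
    by_contra hne
    have hmem : i ∈ (univ : Finset (Fin n)).filter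
        (fun i => (Bk * vecMulVec (y i) (y i)).trace ≠ 0) :=
      Finset.mem_filter.mpr ⟨mem_univ _, hne⟩
    have := Finset.card_pos.mpr ⟨i, hmem⟩
    omega
  | succ N IH =>
    intro y hcard hsum
    by_cases hall : ∀ i, (Bk * vecMulVec (y i) (y i)).trace = 0
    · exact ⟨y, rfl, hall⟩
    push_neg at hall
    obtain ⟨p0, hp0⟩ := hall
    set b : Fin n → ℝ := fun i => (Bk * vecMulVec (y i) (y i)).trace with hbdef
    have hbsum : ∑ i, b i = 0 := by
      rw [hbdef]; rw [← tmul_sum]; exact hsum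
    obtain ⟨P, Q, hPQ, hP, hQ⟩ : ∃ P Q, P ≠ Q ∧ 0 < b P ∧ b Q < 0 := by
      rcases lt_or_gt_of_ne hp0 with hneg | hpos
      · obtain ⟨q, hq, hqneg⟩ := exists_neg_partner (fun i => -b i)
          (by simp [hbsum]) (p := p0) (by simpa using hneg)
        exact ⟨q, p0, hq, by simpa using hqneg, hneg⟩
      · obtain ⟨q, hq, hqneg⟩ := exists_neg_partner b (le_of_eq hbsum) hpos
        exact ⟨p0, q, (Ne.symm hq), hpos, hqneg⟩
    set f : ℝ → ℝ := fun α =>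
      (Bk * vecMulVec (Real.cos α • y P + Real.sin α • y Q)
        (Real.cos α • y P + Real.sin α • y Q)).trace with hfdef
    have hf0 : f 0 = b P := by
      simp [hfdef, hbdef]
    have hfpi : f (Real.pi / 2) = b Q := by
      simp [hfdef, hbdef]
    have hmem0 : (0:ℝ) ∈ Set.Icc (f (Real.pi/2)) (f 0) := by
      rw [hf0, hfpi]; exact ⟨le_of_lt hQ, le_of_lt hP⟩
    obtain ⟨α, hα, hfα⟩ := intermediate_value_Icc'
      (by positivity : (0:ℝ) ≤ Real.pi/2) (cont_f Bk (y P) (y Q)).continuousOn hmem0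
    set u : Fin n → ℝ := Real.cos α • y P + Real.sin α • y Q with hu
    set v : Fin n → ℝ := (-Real.sin α) • y P + Real.cos α • y Q with hv
    set y' := Function.update (Function.update y P u) Q v with hy'
    have hrot := rot_id (Real.cos α) (Real.sin α) (Real.cos_sq_add_sin_sq α) (y P) (y Q)
    have hsum' : ∑ i, vecMulVec (y' i) (y' i) = ∑ i, vecMulVec (y i) (y i) := by
      rw [hy', sum_update_pair y P Q hPQ u v (fun t => vecMulVec t t)]
      rw [hu, hv, hrot]
      abel
    have hy'P : y' P = u := by
      rw [hy', Function.update_of_ne hPQ, Function.update_self]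
    have hbP' : (Bk * vecMulVec (y' P) (y' P)).trace = 0 := by
      rw [hy'P, hu]; exact hfα
    have hsub : ((univ : Finset (Fin n)).filter
          (fun i => (Bk * vecMulVec (y' i) (y' i)).trace ≠ 0))
        ⊆ ((univ : Finset (Fin n)).filter
          (fun i => (Bk * vecMulVec (y i) (y i)).trace ≠ 0)).erase P := by
      intro i hi
      have hi' := (Finset.mem_filter.mp hi).2
      have hiP : i ≠ P := fun hip => hi' (hip ▸ hbP')
      rw [Finset.mem_erase]
      refine ⟨hiP, Finset.mem_filter.mpr ⟨mem_univ _, ?_⟩⟩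
      by_cases hiQ : i = Q
      · subst hiQ; exact ne_of_lt hQ
      · have heq : y' i = y i := by
          rw [hy', Function.update_of_ne hiQ, Function.update_of_ne hiP]
        rw [← heq]; exact hi'
    have hPmem : P ∈ (univ : Finset (Fin n)).filter
        (fun i => (Bk * vecMulVec (y i) (y i)).trace ≠ 0) :=
      Finset.mem_filter.mpr ⟨mem_univ _, ne_of_gt hP⟩
    have hcard' : ((univ : Finset (Fin n)).filter
        (fun i => (Bk * vecMulVec (y' i) (y' i)).trace ≠ 0)).card ≤ N := by
      have h1 := Finset.card_le_card hsub
      rw [Finset.card_erase_of_mem hPmem] at h1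
      have h2 := Finset.card_pos.mpr ⟨P, hPmem⟩
      omega
    have hsum'' : (Bk * ∑ i, vecMulVec (y' i) (y' i)).trace = 0 := by
      rw [hsum']; exact hsum
    obtain ⟨z, hz1, hz2⟩ := IH y' hcard' hsum''
    exact ⟨z, hz1.trans hsum', hz2⟩

lemma main_ind (B : Fin m → Matrix (Fin n) (Fin n) ℝ)
    (h : ∀ k, J0 (B k) ⊆ Jminus B) :
    ∀ N : ℕ, ∀ y : Fin n → Fin n → ℝ,
      ((univ : Finset (Fin n)).filter (fun i => y i ≠ 0)).card ≤ N →
      (∑ i, vecMulVec (y i) (y i)) ∈ Jminus B →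
      (∑ i, vecMulVec (y i) (y i)) ∈ convexHull ℝ (Kcone n ∩ Jminus B) := by
  intro N
  induction N with
  | zero =>
    intro y hcard _
    apply sum_mem_hull
    intro i
    have hyi : y i = 0 := by
      by_contra hne
      have hmem : i ∈ (univ : Finset (Fin n)).filter (fun i => y i ≠ 0) :=
        Finset.mem_filter.mpr ⟨mem_univ _, hne⟩
      have := Finset.card_pos.mpr ⟨i, hmem⟩
      omega
    rw [hyi]
    exact ⟨vmv_psd 0, fun l => by
      rw [show vecMulVec (0 : Fin n → ℝ) 0 = 0 from by ext i j; simp [vecMulVec_apply]]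
      simp⟩
  | succ N IH =>
    intro y hcard hX
    by_cases hgood : ∀ i, vecMulVec (y i) (y i) ∈ Jminus B
    · exact sum_mem_hull B y hgood
    push_neg at hgood
    obtain ⟨p, hp⟩ := hgood
    have hpk : ∃ k, 0 < (B k * vecMulVec (y p) (y p)).trace := by
      by_contra hc
      push_neg at hc
      exact hp ⟨vmv_psd _, fun l => hc l⟩
    obtain ⟨k, hk⟩ := hpk
    by_cases hzero : ∃ k', (B k' * ∑ i, vecMulVec (y i) (y i)).trace = 0
    · -- some constraint is active: Sturm–Zhang + hypothesis h
      obtain ⟨k', hk'⟩ := hzero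
      obtain ⟨z, hz1, hz2⟩ := SZ (B k') n y
        (le_trans (Finset.card_filter_le _ _) (by simp)) hk'
      rw [← hz1]
      apply sum_mem_hull
      intro i
      exact h k' ⟨vmv_psd _, hz2 i⟩
    · push_neg at hzero
      have hstrict : ∀ l, (B l * ∑ i, vecMulVec (y i) (y i)).trace < 0 :=
        fun l => lt_of_le_of_ne (hX.2 l) (hzero l)
      have hbk : ∑ i, (B k * vecMulVec (y i) (y i)).trace ≤ 0 := by
        rw [← tmul_sum]; exact le_of_lt (hstrict k)
      obtain ⟨q, hqp, hq⟩ := exists_neg_partner _ hbk hk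
      have hqp' : p ≠ q := Ne.symm hqp
      have hyp0 : y p ≠ 0 := by
        intro h0
        rw [h0, show vecMulVec (0 : Fin n → ℝ) 0 = 0 from by ext i j; simp [vecMulVec_apply]]
          at hk
        simp at hk
      have hyq0 : y q ≠ 0 := by
        intro h0
        rw [h0, show vecMulVec (0 : Fin n → ℝ) 0 = 0 from by ext i j; simp [vecMulVec_apply]]
          at hq
        simp at hq
      set X := ∑ i, vecMulVec (y i) (y i) with hXdef
      set D := vecMulVec (y p) (y p) - vecMulVec (y q) (y q) with hDdef
      set c : Fin m → ℝ := fun l => (B l * X).trace with hcdef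
      set d : Fin m → ℝ := fun l => (B l * D).trace with hddef
      have htrXD : ∀ (t : ℝ) (l : Fin m), (B l * (X + t • D)).trace = c l + t * d l := by
        intro t l
        rw [tmul_add, tmul_smul]
      -- the two-endpoint auxiliary claim
      have haux : ∀ t : ℝ, -1 ≤ t → t ≤ 1 → (∀ l, c l + t * d l ≤ 0) →
          ((t = 1 ∨ t = -1) ∨ ∃ k', c k' + t * d k' = 0) →
          X + t • D ∈ convexHull ℝ (Kcone n ∩ Jminus B) := by
        intro t ht1 ht2 htcon htb
        have h1t : (0:ℝ) ≤ 1 + t := by linarith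
        have h1t' : (0:ℝ) ≤ 1 - t := by linarith
        set u : Fin n → ℝ := Real.sqrt (1 + t) • y p with hudef
        set v : Fin n → ℝ := Real.sqrt (1 - t) • y q with hvdef
        set y₁ := Function.update (Function.update y p u) q v with hy₁
        have hsum1 : ∑ i, vecMulVec (y₁ i) (y₁ i) = X + t • D := by
          rw [hy₁, sum_update_pair y p q hqp' u v (fun s => vecMulVec s s)]
          rw [hudef, hvdef, vmv_smul, vmv_smul,
            Real.mul_self_sqrt h1t, Real.mul_self_sqrt h1t', hXdef, hDdef]
          module
        have hmemJ : X + t • D ∈ Jminus B := by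
          constructor
          · rw [← hsum1]; exact psd_sum_vmv y₁
          · intro l; rw [htrXD t l]; exact htcon l
        rcases htb with (ht | ht) | ⟨k', hk'⟩
        · -- t = 1 : the q-entry vanishes, apply induction hypothesis
          subst ht
          have hvq : y₁ q = 0 := by
            rw [hy₁, Function.update_self, hvdef]
            norm_num
          have hsub1 : ((univ : Finset (Fin n)).filter (fun i => y₁ i ≠ 0))
              ⊆ ((univ : Finset (Fin n)).filter (fun i => y i ≠ 0)).erase q := by
            intro i hi
            have hi' := (Finset.mem_filter.mp hi).2
            have hiq : i ≠ q := fun hiq => hi' (hiq ▸ hvq)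
            rw [Finset.mem_erase]
            refine ⟨hiq, Finset.mem_filter.mpr ⟨mem_univ _, ?_⟩⟩
            by_cases hip : i = p
            · subst hip; exact hyp0
            · have heq : y₁ i = y i := by
                rw [hy₁, Function.update_of_ne hiq, Function.update_of_ne hip]
              rw [← heq]; exact hi'
          have hqmem : q ∈ (univ : Finset (Fin n)).filter (fun i => y i ≠ 0) :=
            Finset.mem_filter.mpr ⟨mem_univ _, hyq0⟩
          have hcard1 : ((univ : Finset (Fin n)).filter (fun i => y₁ i ≠ 0)).card ≤ N := by
            have h1 := Finset.card_le_card hsub1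
            rw [Finset.card_erase_of_mem hqmem] at h1
            have h2 := Finset.card_pos.mpr ⟨q, hqmem⟩
            omega
          have := IH y₁ hcard1 (hsum1 ▸ hmemJ)
          rwa [hsum1] at this
        · -- t = -1 : the p-entry vanishes
          subst ht
          have hvp : y₁ p = 0 := by
            rw [hy₁, Function.update_of_ne hqp', Function.update_self, hudef]
            norm_num
          have hsub1 : ((univ : Finset (Fin n)).filter (fun i => y₁ i ≠ 0))
              ⊆ ((univ : Finset (Fin n)).filter (fun i => y i ≠ 0)).erase p := by
            intro i hi
            have hi' := (Finset.mem_filter.mp hi).2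
            have hip : i ≠ p := fun hip => hi' (hip ▸ hvp)
            rw [Finset.mem_erase]
            refine ⟨hip, Finset.mem_filter.mpr ⟨mem_univ _, ?_⟩⟩
            by_cases hiq : i = q
            · subst hiq; exact hyq0
            · have heq : y₁ i = y i := by
                rw [hy₁, Function.update_of_ne hiq, Function.update_of_ne hip]
              rw [← heq]; exact hi'
          have hpmem : p ∈ (univ : Finset (Fin n)).filter (fun i => y i ≠ 0) :=
            Finset.mem_filter.mpr ⟨mem_univ _, hyp0⟩
          have hcard1 : ((univ : Finset (Fin n)).filter (fun i => y₁ i ≠ 0)).card ≤ N := by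
            have h1 := Finset.card_le_card hsub1
            rw [Finset.card_erase_of_mem hpmem] at h1
            have h2 := Finset.card_pos.mpr ⟨p, hpmem⟩
            omega
          have := IH y₁ hcard1 (hsum1 ▸ hmemJ)
          rwa [hsum1] at this
        · -- a constraint became active : Sturm–Zhang
          have hac : (B k' * ∑ i, vecMulVec (y₁ i) (y₁ i)).trace = 0 := by
            rw [hsum1, htrXD t k']; exact hk'
          obtain ⟨z, hz1, hz2⟩ := SZ (B k') n y₁
            (le_trans (Finset.card_filter_le _ _) (by simp)) hac
          rw [← hsum1, ← hz1]
          apply sum_mem_hull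
          intro i
          exact h k' ⟨vmv_psd _, hz2 i⟩
      -- construct t⁺ and t⁻
      have hbuild : ∀ e : Fin m → ℝ, ∃ t : ℝ, 0 < t ∧ t ≤ 1 ∧
          (∀ l, c l + t * e l ≤ 0) ∧ (t = 1 ∨ ∃ k', c k' + t * e k' = 0) := by
        intro e
        set s : Finset ℝ := insert (1:ℝ)
          (((univ : Finset (Fin m)).filter (fun l => 0 < e l)).image
            (fun l => -c l / e l)) with hsdef
        have hne : s.Nonempty := ⟨1, Finset.mem_insert_self _ _⟩
        refine ⟨s.min' hne, ?_, ?_, ?_, ?_⟩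
        · rw [Finset.lt_min'_iff]
          intro x hx
          rcases Finset.mem_insert.mp hx with hx1 | hx2
          · rw [hx1]; norm_num
          · obtain ⟨l, hl, rfl⟩ := Finset.mem_image.mp hx2
            have hel : 0 < e l := (Finset.mem_filter.mp hl).2
            exact div_pos (neg_pos.mpr (hstrict l)) hel
        · exact Finset.min'_le _ 1 (Finset.mem_insert_self _ _)
        · intro l
          rcases le_or_gt (e l) 0 with hel | hel
          · have h1 : 0 < s.min' hne := by
              rw [Finset.lt_min'_iff]
              intro x hx
              rcases Finset.mem_insert.mp hx with hx1 | hx2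
              · rw [hx1]; norm_num
              · obtain ⟨l', hl', rfl⟩ := Finset.mem_image.mp hx2
                exact div_pos (neg_pos.mpr (hstrict l')) (Finset.mem_filter.mp hl').2
            have h2 : s.min' hne * e l ≤ 0 := mul_nonpos_of_nonneg_of_nonpos (le_of_lt h1) hel
            have := hstrict l
            simp only [hcdef]
            linarith
          · have hmle : s.min' hne ≤ -c l / e l :=
              Finset.min'_le _ _ (Finset.mem_insert_of_mem
                (Finset.mem_image.mpr ⟨l, Finset.mem_filter.mpr ⟨mem_univ _, hel⟩, rfl⟩))
            have : s.min' hne * e l ≤ -c l := by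
              rw [div_eq_mul_inv] at hmle
              calc s.min' hne * e l ≤ (-c l * (e l)⁻¹) * e l := by
                    apply mul_le_mul_of_nonneg_right hmle (le_of_lt hel)
                _ = -c l := by field_simp
            linarith
        · have hmem := Finset.min'_mem s hne
          rcases Finset.mem_insert.mp hmem with hx1 | hx2
          · exact Or.inl hx1
          · obtain ⟨l, hl, heq⟩ := Finset.mem_image.mp hx2
            refine Or.inr ⟨l, ?_⟩
            have hel : 0 < e l := (Finset.mem_filter.mp hl).2
            rw [← heq, div_mul_cancel₀ _ (ne_of_gt hel)]
            ring
      obtain ⟨tP, htP0, htP1, htPcon, htPb⟩ := hbuild d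
      obtain ⟨tM, htM0, htM1, htMcon, htMb⟩ := hbuild (fun l => -d l)
      have hYP : X + tP • D ∈ convexHull ℝ (Kcone n ∩ Jminus B) := by
        apply haux tP (by linarith) htP1 htPcon
        rcases htPb with h1 | ⟨k', hk'⟩
        · exact Or.inl (Or.inl h1)
        · exact Or.inr ⟨k', hk'⟩
      have hYM : X + (-tM) • D ∈ convexHull ℝ (Kcone n ∩ Jminus B) := by
        apply haux (-tM) (by linarith) (by linarith)
        · intro l
          have := htMcon l
          linarith [htMcon l]
        · rcases htMb with h1 | ⟨k', hk'⟩
          · exact Or.inl (Or.inr (by linarith))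
          · refine Or.inr ⟨k', ?_⟩
            have := hk'
            linarith
      have hSpos : 0 < tP + tM := by linarith
      set a : ℝ := tM / (tP + tM) with hadef
      set bb : ℝ := tP / (tP + tM) with hbbdef
      have hab : a + bb = 1 := by
        rw [hadef, hbbdef, ← add_div, add_comm tM tP, div_self (ne_of_gt hSpos)]
      have ha0 : 0 ≤ a := div_nonneg (le_of_lt htM0) (le_of_lt hSpos)
      have hbb0 : 0 ≤ bb := div_nonneg (le_of_lt htP0) (le_of_lt hSpos)
      have hcomb : a • (X + tP • D) + bb • (X + (-tM) • D)
          = (a + bb) • X + (a * tP + bb * (-tM)) • D := by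
        module
      have hzero2 : a * tP + bb * (-tM) = 0 := by
        rw [hadef, hbbdef]
        field_simp
        ring
      have hXeq : X = a • (X + tP • D) + bb • (X + (-tM) • D) := by
        rw [hcomb, hab, hzero2, one_smul, zero_smul, add_zero]
      rw [hXdef] at hXeq ⊢
      rw [hXeq]
      exact (convex_convexHull ℝ _) hYP hYM ha0 hbb0 hab

end Stmt15Aux

open Stmt15Aux Finset in
/-- Theorem 4.1 (i): if `J₀(B_k) ⊆ J₋` for every `k`, then `co (K ∩ J₋) = J₋`,
i.e. `J₋ ∈ F̂(K)`. -/
theorem stmt_15 {n m : ℕ} (B : Fin m → Matrix (Fin n) (Fin n) ℝ)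
    (hBsym : ∀ k, (B k).IsSymm)
    (h : ∀ k, J0 (B k) ⊆ Jminus B) :
    convexHull ℝ (Kcone n ∩ Jminus B) = Jminus B := by
  apply Set.Subset.antisymm
  · apply convexHull_min Set.inter_subset_right
    intro X hX Y hY a b ha hb hab
    constructor
    · exact (psd_smul hX.1 ha).add (psd_smul hY.1 hb)
    · intro l
      rw [mul_add, trace_add, tmul_smul, tmul_smul]
      have h1 : a * (B l * X).trace ≤ 0 := mul_nonpos_of_nonneg_of_nonpos ha (hX.2 l)
      have h2 : b * (B l * Y).trace ≤ 0 := mul_nonpos_of_nonneg_of_nonpos hb (hY.2 l)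
      linarith
  · intro X hX
    obtain ⟨y, rfl⟩ := psd_decomp hX.1
    exact main_ind B h n y (le_trans (Finset.card_filter_le _ _) (by simp)) hX
end

section
/- Let K ⊆ V be a nonempty cone and B ∈ V, and define J₀(B) = {X ∈ co K : ⟨B,X⟩ = 0} and J₋(B) = {X ∈ co K : ⟨B,X⟩ ≤ 0}. Then co(K ∩ J₀(B)) = J₀(B) if and only if co(K ∩ J₋(B)) = J₋(B); that is, J₀(B) ∈ F̂(K) is equivalent to J₋(B) ∈ F̂(K). -/
open RealInnerProductSpace Pointwise

variable {V : Type*} [NormedAddCommGroup V] [InnerProductSpace ℝ V]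

lemma isCone_hull {C : Set V} (h : IsCone C) : IsCone (convexHull ℝ C) := by
  intro X hX l hl
  have h1 : l • X ∈ l • convexHull ℝ C := Set.smul_mem_smul_set hX
  rw [← convexHull_smul] at h1
  exact convexHull_mono (by rintro y ⟨z, hz, rfl⟩; exact h z hz l hl) h1

lemma add_mem_hull {C : Set V} (h : IsCone C) {x y : V}
    (hx : x ∈ convexHull ℝ C) (hy : y ∈ convexHull ℝ C) :
    x + y ∈ convexHull ℝ C := by
  have hm : (1/2 : ℝ) • x + (1/2 : ℝ) • y ∈ convexHull ℝ C :=
    (convex_convexHull ℝ C) hx hy (by norm_num) (by norm_num) (by norm_num)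
  have h2 := isCone_hull h _ hm 2 (by norm_num)
  rwa [smul_add, smul_smul, smul_smul, (by norm_num : (2:ℝ)*(1/2)=1), one_smul,
    one_smul] at h2

lemma sum_mem_hull {C : Set V} (h : IsCone C) (h0 : (0:V) ∈ convexHull ℝ C)
    {ι : Type*} (s : Finset ι) (f : ι → V) (hf : ∀ i ∈ s, f i ∈ convexHull ℝ C) :
    ∑ i ∈ s, f i ∈ convexHull ℝ C := by
  classical
  induction s using Finset.induction with
  | empty => simpa using h0
  | insert _ _ hni ih =>
    rw [Finset.sum_insert hni]
    exact add_mem_hull h (hf _ (Finset.mem_insert_self _ _))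
      (ih fun i hi => hf i (Finset.mem_insert_of_mem hi))

/-- Remark 4.1 / Theorem 4.3 (i) in the general setting: for a nonempty cone `K ⊆ V`
and `B ∈ V`, with `J₀(B) = {X ∈ co K : ⟨B, X⟩ = 0}` and `J₋(B) = {X ∈ co K : ⟨B, X⟩ ≤ 0}`,
`co (K ∩ J₀(B)) = J₀(B)` iff `co (K ∩ J₋(B)) = J₋(B)`. -/
theorem stmt_18 [FiniteDimensional ℝ V] (K : Set V)
    (hKne : K.Nonempty) (hKcone : IsCone K) (B : V) :
    convexHull ℝ (K ∩ {X ∈ convexHull ℝ K | ⟪B, X⟫ = 0}) = {X ∈ convexHull ℝ K | ⟪B, X⟫ = 0} ↔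
    convexHull ℝ (K ∩ {X ∈ convexHull ℝ K | ⟪B, X⟫ ≤ 0}) = {X ∈ convexHull ℝ K | ⟪B, X⟫ ≤ 0} := by
  classical
  set C := convexHull ℝ K with hCdef
  set J0 : Set V := {X ∈ C | ⟪B, X⟫ = 0} with hJ0def
  set Jm : Set V := {X ∈ C | ⟪B, X⟫ ≤ 0} with hJmdef
  have hK0 : (0:V) ∈ K := by
    obtain ⟨k, hk⟩ := hKne
    simpa using hKcone k hk 0 le_rfl
  have hKC : K ⊆ C := subset_convexHull ℝ K
  have hC0 : (0:V) ∈ C := hKC hK0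
  have hCcone : IsCone C := isCone_hull hKcone
  have h0m : J0 ⊆ Jm := fun X hX => ⟨hX.1, le_of_eq hX.2⟩
  have hJ0conv : Convex ℝ J0 := by
    intro x hx y hy a b ha hb hab
    refine ⟨convex_convexHull ℝ K hx.1 hy.1 ha hb hab, ?_⟩
    rw [inner_add_right, inner_smul_right, inner_smul_right, hx.2, hy.2]
    ring
  have hJmconv : Convex ℝ Jm := by
    intro x hx y hy a b ha hb hab
    refine ⟨convex_convexHull ℝ K hx.1 hy.1 ha hb hab, ?_⟩
    rw [inner_add_right, inner_smul_right, inner_smul_right]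
    have := mul_nonneg ha (neg_nonneg.2 hx.2)
    have := mul_nonneg hb (neg_nonneg.2 hy.2)
    nlinarith
  have hJ0cone : IsCone (K ∩ J0) := by
    rintro X ⟨hXK, hXC, hXB⟩ l hl
    exact ⟨hKcone X hXK l hl, hCcone X hXC l hl, by rw [inner_smul_right, hXB]; ring⟩
  have hJmcone : IsCone (K ∩ Jm) := by
    rintro X ⟨hXK, hXC, hXB⟩ l hl
    exact ⟨hKcone X hXK l hl, hCcone X hXC l hl, by
      rw [inner_smul_right]; exact mul_nonpos_of_nonneg_of_nonpos hl hXB⟩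
  have h0J0 : (0:V) ∈ K ∩ J0 := ⟨hK0, hC0, by simp⟩
  have h0Jm : (0:V) ∈ K ∩ Jm := ⟨hK0, hC0, by simp⟩
  constructor
  · intro h0
    refine Set.Subset.antisymm (convexHull_min Set.inter_subset_right hJmconv) ?_
    rintro X ⟨hXC, hXB⟩
    -- decompose X as a sum of elements of K
    rw [hCdef, convexHull_eq] at hXC
    obtain ⟨ι, t, w, z, hw, hw1, hz, hXcm⟩ := hXC
    rw [Finset.centerMass_eq_of_sum_1 _ _ hw1] at hXcm
    set y : ι → V := fun i => w i • z i with hydef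
    have hyK : ∀ i ∈ t, y i ∈ K := fun i hi => hKcone (z i) (hz i hi) (w i) (hw i hi)
    set P : Finset ι := t.filter (fun i => ⟪B, y i⟫ ≤ 0) with hPdef
    set Q : Finset ι := t.filter (fun i => ¬ ⟪B, y i⟫ ≤ 0) with hQdef
    set Xm : V := ∑ i ∈ P, y i with hXm
    set Xp : V := ∑ i ∈ Q, y i with hXp
    have hsplit : Xm + Xp = X := by
      rw [hXm, hXp, Finset.sum_filter_add_sum_filter_not, hXcm]
    have hXmD : Xm ∈ convexHull ℝ (K ∩ Jm) := by
      refine sum_mem_hull hJmcone (subset_convexHull ℝ _ h0Jm) P y fun i hi => ?_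
      have hit := Finset.mem_filter.mp hi
      exact subset_convexHull ℝ _ ⟨hyK i hit.1, hKC (hyK i hit.1), hit.2⟩
    have hXmC : Xm ∈ C := sum_mem_hull hKcone hC0 P y fun i hi =>
      hKC (hyK i (Finset.mem_filter.mp hi).1)
    have hXpC : Xp ∈ C := sum_mem_hull hKcone hC0 Q y fun i hi =>
      hKC (hyK i (Finset.mem_filter.mp hi).1)
    have ha : ⟪B, Xm⟫ ≤ 0 := by
      rw [hXm, inner_sum]
      exact Finset.sum_nonpos fun i hi => (Finset.mem_filter.mp hi).2
    have hb : (0:ℝ) ≤ ⟪B, Xp⟫ := by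
      rw [hXp, inner_sum]
      exact Finset.sum_nonneg fun i hi => le_of_lt (not_le.mp (Finset.mem_filter.mp hi).2)
    have hab : ⟪B, Xm⟫ + ⟪B, Xp⟫ ≤ 0 := by
      rw [← inner_add_right, hsplit]; exact hXB
    rcases eq_or_lt_of_le hb with hb0 | hbpos
    · -- Xp = 0
      have hQ : Q = ∅ := by
        by_contra hne
        have : (0:ℝ) < ∑ i ∈ Q, ⟪B, y i⟫ :=
          Finset.sum_pos (fun i hi => not_le.mp (Finset.mem_filter.mp hi).2)
            (Finset.nonempty_of_ne_empty hne)
        rw [hXp, inner_sum] at hb0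
        linarith
      have : Xp = 0 := by rw [hXp, hQ, Finset.sum_empty]
      rw [← hsplit, this, add_zero]
      exact hXmD
    · have hapos : ⟪B, Xm⟫ < 0 := by linarith
      set l : ℝ := ⟪B, Xp⟫ / (-⟪B, Xm⟫) with hldef
      have hlpos : 0 < l := div_pos hbpos (by linarith)
      have hl1 : l ≤ 1 := by
        rw [hldef, div_le_one (by linarith)]
        linarith
      set Y : V := Xp + l • Xm with hYdef
      have hYC : Y ∈ C := add_mem_hull hKcone hXpC (hCcone Xm hXmC l (le_of_lt hlpos))
      have hYB : ⟪B, Y⟫ = 0 := by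
        rw [hYdef, inner_add_right, inner_smul_right, hldef]
        field_simp [hapos.ne]
        ring
      have hYJ0 : Y ∈ J0 := ⟨hYC, hYB⟩
      have hYD : Y ∈ convexHull ℝ (K ∩ Jm) := by
        rw [← h0] at hYJ0
        exact convexHull_mono (Set.inter_subset_inter_right K h0m) hYJ0
      have hX : X = (1 - l) • Xm + Y := by
        rw [hYdef, ← hsplit, sub_smul, one_smul]
        abel
      rw [hX]
      exact add_mem_hull hJmcone
        (isCone_hull hJmcone Xm hXmD (1 - l) (by linarith)) hYD
  · intro hm
    refine Set.Subset.antisymm (convexHull_min Set.inter_subset_right hJ0conv) ?_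
    rintro X ⟨hXC, hXB⟩
    have hXJm : X ∈ convexHull ℝ (K ∩ Jm) := by
      rw [hm]; exact ⟨hXC, le_of_eq hXB⟩
    rw [convexHull_eq] at hXJm
    obtain ⟨ι, t, w, z, hw, hw1, hz, hXcm⟩ := hXJm
    rw [Finset.centerMass_eq_of_sum_1 _ _ hw1] at hXcm
    have hterm : ∀ i ∈ t, w i * ⟪B, z i⟫ ≤ 0 := fun i hi =>
      mul_nonpos_of_nonneg_of_nonpos (hw i hi) (hz i hi).2.2
    have hsum0 : ∑ i ∈ t, w i * ⟪B, z i⟫ = 0 := by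
      have : ⟪B, X⟫ = ∑ i ∈ t, w i * ⟪B, z i⟫ := by
        rw [← hXcm, inner_sum]
        exact Finset.sum_congr rfl fun i _ => inner_smul_right _ _ _
      rw [← this, hXB]
    have hzero : ∀ i ∈ t, w i * ⟪B, z i⟫ = 0 :=
      fun i hi => (Finset.sum_eq_zero_iff_of_nonpos hterm).mp hsum0 i hi
    set z' : ι → V := fun i => if ⟪B, z i⟫ = 0 then z i else 0 with hz'def
    have hz'mem : ∀ i ∈ t, z' i ∈ K ∩ J0 := by
      intro i hi
      by_cases h : ⟪B, z i⟫ = 0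
      · simpa [hz'def, h] using ⟨(hz i hi).1, (hz i hi).2.1, h⟩
      · simpa [hz'def, h] using h0J0
    have hXeq : X = ∑ i ∈ t, w i • z' i := by
      rw [← hXcm]
      refine Finset.sum_congr rfl fun i hi => ?_
      by_cases h : ⟪B, z i⟫ = 0
      · simp [hz'def, h]
      · have hwi : w i = 0 := by
          rcases mul_eq_zero.mp (hzero i hi) with h' | h'
          · exact h'
          · exact absurd h' h
        simp [hwi]
    rw [hXeq, ← Finset.centerMass_eq_of_sum_1 _ _ hw1]
    exact Finset.centerMass_mem_convexHull t hw (by rw [hw1]; norm_num) hz'mem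
end

section
/- Let K = {xxᵀ : x ∈ ℝⁿ} ⊆ Sⁿ and let B ∈ Sⁿ. Then J₀(B) ∈ F̂(K); that is, co(K ∩ J₀(B)) = J₀(B): every positive semidefinite matrix X with ⟨B,X⟩ = 0 is a finite sum of rank-one matrices x_i x_iᵀ satisfying x_iᵀ B x_i = 0. -/
open Matrix

private lemma trace_mul_vecMulVec {n : ℕ} (B : Matrix (Fin n) (Fin n) ℝ) (y : Fin n → ℝ) :
    (B * vecMulVec y y).trace = y ⬝ᵥ B.mulVec y := by
  simp only [trace, diag, Matrix.mul_apply, vecMulVec_apply, dotProduct, mulVec,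
    Finset.mul_sum]
  exact Finset.sum_congr rfl fun i _ => Finset.sum_congr rfl fun j _ => by ring

private lemma psd_vecMulVec {n : ℕ} (x : Fin n → ℝ) : (vecMulVec x x).PosSemidef := by
  refine Matrix.posSemidef_iff_dotProduct_mulVec.mpr ⟨?_, ?_⟩
  · ext i j; simp [vecMulVec_apply, IsHermitian, conjTranspose_apply, mul_comm]
  · intro v
    have h : star v ⬝ᵥ (vecMulVec x x).mulVec v = (x ⬝ᵥ v) * (x ⬝ᵥ v) := by
      simp only [dotProduct, mulVec, vecMulVec_apply, Finset.mul_sum, Finset.sum_mul,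
        star_trivial]
      rw [Finset.sum_comm]
      exact Finset.sum_congr rfl fun i _ => Finset.sum_congr rfl fun j _ => by ring
    rw [h]; exact mul_self_nonneg _

private lemma psd_smul {n : ℕ} {c : ℝ} {M : Matrix (Fin n) (Fin n) ℝ} (hc : 0 ≤ c)
    (hM : M.PosSemidef) : (c • M).PosSemidef := by
  refine Matrix.posSemidef_iff_dotProduct_mulVec.mpr ⟨?_, ?_⟩
  · ext i j
    have hsym : M j i = M i j := by
      conv_lhs => rw [← hM.1]
      simp [conjTranspose_apply]
    simp [conjTranspose_apply, hsym]
  · intro x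
    rw [smul_mulVec, dotProduct_smul, smul_eq_mul]
    exact mul_nonneg hc (hM.dotProduct_mulVec_nonneg x)

private lemma quad_expand {n : ℕ} (B : Matrix (Fin n) (Fin n) ℝ) (y z : Fin n → ℝ) (c s : ℝ) :
    (c • y + s • z) ⬝ᵥ B.mulVec (c • y + s • z)
      = c^2 * (y ⬝ᵥ B.mulVec y) + c * s * (y ⬝ᵥ B.mulVec z + z ⬝ᵥ B.mulVec y)
        + s^2 * (z ⬝ᵥ B.mulVec z) := by
  simp only [Matrix.mulVec_add, Matrix.mulVec_smul, dotProduct_add, add_dotProduct,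
    dotProduct_smul, smul_dotProduct, smul_eq_mul]
  ring

private lemma rot_sum {n : ℕ} (y z : Fin n → ℝ) (c s : ℝ) (h : c^2 + s^2 = 1) :
    vecMulVec (c • y + s • z) (c • y + s • z)
      + vecMulVec ((-s) • y + c • z) ((-s) • y + c • z)
      = vecMulVec y y + vecMulVec z z := by
  ext i j
  simp only [Matrix.add_apply, vecMulVec_apply, Pi.add_apply, Pi.smul_apply, smul_eq_mul]
  linear_combination (y i * y j + z i * z j) * h

private lemma exists_cs (a b m : ℝ) (ha : 0 < a) (hb : b < 0) :
    ∃ c s : ℝ, c^2 + s^2 = 1 ∧ a * c^2 + m * (c * s) + b * s^2 = 0 := by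
  have hd : (0:ℝ) ≤ m^2 - 4*a*b := by nlinarith
  set d := Real.sqrt (m^2 - 4*a*b) with hdd
  have hd2 : d^2 = m^2 - 4*a*b := Real.sq_sqrt hd
  have hbne : b ≠ 0 := ne_of_lt hb
  set t := (-m + d) / (2*b) with htdef
  have ht : b * t^2 + m * t + a = 0 := by
    have h4 : b * t^2 + m * t + a = (d^2 - (m^2 - 4*a*b))/(4*b) := by
      rw [htdef]; field_simp; ring
    rw [h4, hd2, sub_self, zero_div]
  have h1 : (0:ℝ) < 1 + t^2 := by positivity
  have hs : Real.sqrt (1 + t^2) ^ 2 = 1 + t^2 := Real.sq_sqrt h1.le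
  have hsne : Real.sqrt (1 + t^2) ≠ 0 := by positivity
  refine ⟨1 / Real.sqrt (1 + t^2), t / Real.sqrt (1 + t^2), ?_, ?_⟩
  · have : (1/Real.sqrt (1+t^2))^2 + (t/Real.sqrt (1+t^2))^2
        = (1 + t^2) / (Real.sqrt (1+t^2))^2 := by ring
    rw [this, hs, div_self h1.ne']
  · have : a * (1 / Real.sqrt (1 + t^2))^2
        + m * ((1 / Real.sqrt (1 + t^2)) * (t / Real.sqrt (1 + t^2)))
        + b * (t / Real.sqrt (1 + t^2))^2
        = (b * t^2 + m * t + a) / (Real.sqrt (1+t^2))^2 := by ring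
    rw [this, ht, zero_div]

private lemma sum_update_pair {n : ℕ} {M : Type*} [AddCommMonoid M] {r : ℕ}
    (y : Fin r → (Fin n → ℝ)) (f : (Fin n → ℝ) → M) (p q : Fin r) (hpq : p ≠ q)
    (w w' : Fin n → ℝ) (h : f w + f w' = f (y p) + f (y q)) :
    ∑ k, f (Function.update (Function.update y p w) q w' k) = ∑ k, f (y k) := by
  classical
  have key : ∀ k, f (Function.update (Function.update y p w) q w' k)
      = Function.update (Function.update (fun j => f (y j)) p (f w)) q (f w') k := by
    intro k
    by_cases h1 : k = q
    · subst h1; simp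
    · by_cases h2 : k = p
      · subst h2
        rw [Function.update_of_ne h1, Function.update_of_ne h1, Function.update_self,
          Function.update_self]
      · rw [Function.update_of_ne h1, Function.update_of_ne h2, Function.update_of_ne h1,
          Function.update_of_ne h2]
  simp_rw [key]
  have hp : p ∈ (Finset.univ : Finset (Fin r)) \ {q} := by simp [hpq]
  rw [Finset.sum_update_of_mem (Finset.mem_univ q), Finset.sum_update_of_mem hp,
    Finset.sum_eq_sum_sdiff_singleton_add (Finset.mem_univ q) (fun j => f (y j)),
    Finset.sum_eq_sum_sdiff_singleton_add hp (fun j => f (y j))]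
  calc f w' + (f w + ∑ x ∈ ((Finset.univ : Finset (Fin r)) \ {q}) \ {p}, f (y x))
      = (f w + f w') + ∑ x ∈ ((Finset.univ : Finset (Fin r)) \ {q}) \ {p}, f (y x) := by
        rw [← add_assoc, add_comm (f w') (f w)]
    _ = (f (y p) + f (y q)) + ∑ x ∈ ((Finset.univ : Finset (Fin r)) \ {q}) \ {p}, f (y x) := by
        rw [h]
    _ = (∑ x ∈ ((Finset.univ : Finset (Fin r)) \ {q}) \ {p}, f (y x) + f (y p)) + f (y q) := by
        rw [add_comm _ (∑ x ∈ ((Finset.univ : Finset (Fin r)) \ {q}) \ {p}, f (y x)), add_assoc]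

private lemma reduce {n : ℕ} (B : Matrix (Fin n) (Fin n) ℝ) :
    ∀ (k r : ℕ) (y : Fin r → (Fin n → ℝ)),
      (Finset.univ.filter fun i => y i ⬝ᵥ B.mulVec (y i) ≠ 0).card ≤ k →
      (∑ i, y i ⬝ᵥ B.mulVec (y i)) = 0 →
      ∃ x : Fin r → (Fin n → ℝ),
        (∑ i, vecMulVec (x i) (x i)) = (∑ i, vecMulVec (y i) (y i)) ∧
        ∀ i, x i ⬝ᵥ B.mulVec (x i) = 0 := by
  intro k
  induction k with
  | zero =>
    intro r y hcard _
    refine ⟨y, rfl, fun i => ?_⟩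
    by_contra h
    have hi : i ∈ Finset.univ.filter fun i => y i ⬝ᵥ B.mulVec (y i) ≠ 0 :=
      Finset.mem_filter.mpr ⟨Finset.mem_univ i, h⟩
    have := Finset.card_pos.mpr ⟨i, hi⟩
    omega
  | succ k ih =>
    intro r y hcard hsum
    by_cases h0 : ∀ i, y i ⬝ᵥ B.mulVec (y i) = 0
    · exact ⟨y, rfl, h0⟩
    push_neg at h0
    obtain ⟨i0, hi0⟩ := h0
    -- find an index with positive value
    have hpos : ∃ p, 0 < y p ⬝ᵥ B.mulVec (y p) := by
      by_contra hno
      push_neg at hno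
      have := (Finset.sum_eq_zero_iff_of_nonpos (fun i _ => hno i)).mp hsum
      exact hi0 (this i0 (Finset.mem_univ i0))
    have hneg : ∃ q, y q ⬝ᵥ B.mulVec (y q) < 0 := by
      by_contra hno
      push_neg at hno
      have := (Finset.sum_eq_zero_iff_of_nonneg (fun i _ => hno i)).mp hsum
      exact hi0 (this i0 (Finset.mem_univ i0))
    obtain ⟨p, hp⟩ := hpos
    obtain ⟨q, hq⟩ := hneg
    have hpq : p ≠ q := by
      intro h; subst h; linarith
    obtain ⟨c, s, hcs, hquad⟩ := exists_cs (y p ⬝ᵥ B.mulVec (y p)) (y q ⬝ᵥ B.mulVec (y q))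
      (y p ⬝ᵥ B.mulVec (y q) + y q ⬝ᵥ B.mulVec (y p)) hp hq
    set w := c • y p + s • y q with hw
    set w' := (-s) • y p + c • y q with hw'
    set y' := Function.update (Function.update y p w) q w' with hy'
    have hqw : w ⬝ᵥ B.mulVec w = 0 := by
      rw [hw, quad_expand]; linarith [hquad]
    have hpair : (w ⬝ᵥ B.mulVec w) + (w' ⬝ᵥ B.mulVec w') =
        (y p ⬝ᵥ B.mulVec (y p)) + (y q ⬝ᵥ B.mulVec (y q)) := by
      rw [hw, hw', quad_expand, quad_expand]
      linear_combination ((y p ⬝ᵥ B.mulVec (y p)) + (y q ⬝ᵥ B.mulVec (y q))) * hcs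
    have hy'p : y' p = w := by
      rw [hy', Function.update_of_ne hpq, Function.update_self]
    have hy'q : y' q = w' := by rw [hy', Function.update_self]
    have hy'other : ∀ x, x ≠ p → x ≠ q → y' x = y x := by
      intro x hxp hxq
      rw [hy', Function.update_of_ne hxq, Function.update_of_ne hxp]
    have hsum' : (∑ i, y' i ⬝ᵥ B.mulVec (y' i)) = 0 := by
      rw [hy', sum_update_pair y (fun v => v ⬝ᵥ B.mulVec v) p q hpq w w' hpair]
      exact hsum
    have hcard' : (Finset.univ.filter fun i => y' i ⬝ᵥ B.mulVec (y' i) ≠ 0).card ≤ k := by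
      have hsub : (Finset.univ.filter fun i => y' i ⬝ᵥ B.mulVec (y' i) ≠ 0)
          ⊆ (Finset.univ.filter fun i => y i ⬝ᵥ B.mulVec (y i) ≠ 0).erase p := by
        intro x hx
        rw [Finset.mem_filter] at hx
        have hxp : x ≠ p := by
          intro h; subst h
          rw [hy'p] at hx
          exact hx.2 hqw
        refine Finset.mem_erase.mpr ⟨hxp, Finset.mem_filter.mpr ⟨Finset.mem_univ x, ?_⟩⟩
        by_cases hxq : x = q
        · subst hxq; exact ne_of_lt hq
        · rw [hy'other x hxp hxq] at hx; exact hx.2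
      have hpm : p ∈ Finset.univ.filter fun i => y i ⬝ᵥ B.mulVec (y i) ≠ 0 :=
        Finset.mem_filter.mpr ⟨Finset.mem_univ p, ne_of_gt hp⟩
      have h1 := Finset.card_le_card hsub
      rw [Finset.card_erase_of_mem hpm] at h1
      have h2 := Finset.card_pos.mpr ⟨p, hpm⟩
      omega
    obtain ⟨x, hx1, hx2⟩ := ih r y' hcard' hsum'
    refine ⟨x, ?_, hx2⟩
    rw [hx1, hy', sum_update_pair y (fun v => vecMulVec v v) p q hpq w w' ?_]
    rw [hw, hw']
    exact rot_sum (y p) (y q) c s hcs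

open scoped MatrixOrder in
private lemma psd_factor {n : ℕ} {X : Matrix (Fin n) (Fin n) ℝ} (h : X.PosSemidef) :
    ∃ C : Matrix (Fin n) (Fin n) ℝ, X = Cᴴ * C :=
  CStarAlgebra.nonneg_iff_eq_star_mul_self.mp h.nonneg

/-- Theorem 4.3 (ii): `J₀(B) ∈ F̂(K)`, i.e. `co (K ∩ J₀(B)) = J₀(B)`: every PSD matrix
`X` with `⟨B, X⟩ = 0` is a finite sum of rank-one matrices `xᵢ xᵢᵀ` with `xᵢᵀ B xᵢ = 0`. -/
theorem stmt_19 {n : ℕ} (B : Matrix (Fin n) (Fin n) ℝ) (hBsym : B.IsSymm) :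
    convexHull ℝ (Kcone n ∩ J0 B) = J0 B ∧
    ∀ X : Matrix (Fin n) (Fin n) ℝ, X.PosSemidef → (B * X).trace = 0 →
      ∃ (r : ℕ) (x : Fin r → (Fin n → ℝ)),
        X = ∑ i, vecMulVec (x i) (x i) ∧ ∀ i, x i ⬝ᵥ B.mulVec (x i) = 0 := by
  have main : ∀ X : Matrix (Fin n) (Fin n) ℝ, X.PosSemidef → (B * X).trace = 0 →
      ∃ (r : ℕ) (x : Fin r → (Fin n → ℝ)),
        X = ∑ i, vecMulVec (x i) (x i) ∧ ∀ i, x i ⬝ᵥ B.mulVec (x i) = 0 := by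
    intro X hXpsd hXtr
    obtain ⟨C, hC⟩ := psd_factor hXpsd
    have hdecomp : X = ∑ i, vecMulVec (C i) (C i) := by
      rw [hC]
      ext j k
      simp only [Matrix.mul_apply, conjTranspose_apply, star_trivial, Matrix.sum_apply,
        vecMulVec_apply]
    have hsum0 : (∑ i, C i ⬝ᵥ B.mulVec (C i)) = 0 := by
      have : (B * X).trace = ∑ i, C i ⬝ᵥ B.mulVec (C i) := by
        rw [hdecomp, Finset.mul_sum, trace_sum]
        exact Finset.sum_congr rfl fun i _ => trace_mul_vecMulVec B (C i)
      rw [← this, hXtr]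
    obtain ⟨x, hx1, hx2⟩ := reduce B
      (Finset.univ.filter fun i => C i ⬝ᵥ B.mulVec (C i) ≠ 0).card n C le_rfl hsum0
    exact ⟨n, x, by rw [hdecomp, ← hx1], hx2⟩
  have hJ0convex : Convex ℝ (J0 B) := by
    intro X hX Y hY a b ha hb hab
    refine ⟨Matrix.PosSemidef.add (psd_smul ha hX.1) (psd_smul hb hY.1), ?_⟩
    rw [Matrix.mul_add, trace_add, mul_smul_comm, mul_smul_comm, trace_smul, trace_smul,
      hX.2, hY.2]
    simp
  constructor
  · apply le_antisymm
    · exact convexHull_min Set.inter_subset_right hJ0convex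
    · intro X hX
      obtain ⟨r, x, hxeq, hxzero⟩ := main X hX.1 hX.2
      rcases Nat.eq_zero_or_pos r with hr | hr
      · subst hr
        have hX0 : X = 0 := by rw [hxeq]; simp
        apply subset_convexHull
        refine ⟨⟨0, by rw [hX0]; ext i j; simp [vecMulVec_apply]⟩, ?_⟩
        rw [hX0]
        exact ⟨Matrix.PosSemidef.zero, by simp⟩
      · have hrne : (r : ℝ) ≠ 0 := Nat.cast_ne_zero.mpr hr.ne'
        have hXeq : X = ∑ i : Fin r, ((1 : ℝ)/r) • ((r : ℝ) • vecMulVec (x i) (x i)) := by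
          rw [hxeq]
          refine Finset.sum_congr rfl fun i _ => ?_
          rw [smul_smul, one_div, inv_mul_cancel₀ hrne, one_smul]
        rw [hXeq]
        refine Convex.sum_mem (convex_convexHull ℝ _) (fun i _ => by positivity) ?_ ?_
        · rw [Finset.sum_const, Finset.card_univ, Fintype.card_fin, nsmul_eq_mul, one_div,
            mul_inv_cancel₀ hrne]
        · intro i _
          apply subset_convexHull
          constructor
          · refine ⟨Real.sqrt r • x i, ?_⟩
            ext j k
            simp only [Matrix.smul_apply, vecMulVec_apply, Pi.smul_apply, smul_eq_mul]
            have h5 : Real.sqrt r * Real.sqrt r = r := Real.mul_self_sqrt (Nat.cast_nonneg r)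
            linear_combination (x i j * x i k) * h5.symm
          · refine ⟨psd_smul (Nat.cast_nonneg r) (psd_vecMulVec (x i)), ?_⟩
            rw [mul_smul_comm, trace_smul, trace_mul_vecMulVec, hxzero i, smul_zero]
  · exact main
end
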